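/- arXiv:2402.13622 — 11 statements merged into one kernel-verified Lean document; each statement's English description precedes it below -/
import Mathlib

section
/- Let λ > 0 and α > 0, and let μ be a probability measure on [0,∞) such that the identity function p ↦ p is μ-integrable. Then there exists a unique v > 0 satisfying v = 1/(λ + α·∫ p/(1+p·v) dμ(p)). -/
open MeasureTheory

/-- Existence and uniqueness of the positive fixed point
`v = 1/(λ + α·∫ p/(1+p·v) dμ(p))` for a probability measure `μ` on `[0,∞)`
with integrable identity function. -/
theorem stmt0 (lam alpha : ℝ) (hlam : 0 < lam) (halpha : 0 < alpha)
    (μ : Measure ℝ) [IsProbabilityMeasure μ]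
    (hsupp : ∀ᵐ p ∂μ, 0 ≤ p)
    (hint : Integrable (fun p : ℝ => p) μ) :
    ∃! v : ℝ, 0 < v ∧ v = 1 / (lam + alpha * ∫ p, p / (1 + p * v) ∂μ) := by
  -- integrand and helper function
  set J : ℝ → ℝ → ℝ := fun v p => v * p / (1 + p * v) with hJ
  have hmeas : ∀ v : ℝ, Measurable (J v) := fun v =>
    (measurable_const.mul measurable_id).div
      (measurable_const.add (measurable_id.mul_const v))
  have hdenom : ∀ {p v : ℝ}, 0 ≤ p → 0 ≤ v → (0:ℝ) < 1 + p * v := by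
    intro p v hp hv; nlinarith
  have hbound : ∀ {p v : ℝ}, 0 ≤ p → 0 ≤ v → J v p ∈ Set.Icc (0:ℝ) 1 := by
    intro p v hp hv
    constructor
    · exact div_nonneg (by positivity) (le_of_lt (hdenom hp hv))
    · rw [div_le_one (hdenom hp hv)]; nlinarith
  have hintJ : ∀ v : ℝ, 0 ≤ v → Integrable (J v) μ := by
    intro v hv
    refine Integrable.mono' (integrable_const 1) ((hmeas v).aestronglyMeasurable) ?_
    filter_upwards [hsupp] with p hp
    rw [Real.norm_eq_abs, abs_of_nonneg (hbound hp hv).1]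
    exact (hbound hp hv).2
  set h : ℝ → ℝ := fun v => lam * v + alpha * ∫ p, J v p ∂μ with hh
  -- strict monotonicity of h on [0,∞)
  have hmono : StrictMonoOn h (Set.Ici 0) := by
    intro v₁ hv₁ v₂ hv₂ hlt
    have hIle : (∫ p, J v₁ p ∂μ) ≤ ∫ p, J v₂ p ∂μ := by
      refine integral_mono_ae (hintJ v₁ hv₁) (hintJ v₂ hv₂) ?_
      filter_upwards [hsupp] with p hp
      rw [hJ]
      dsimp only
      rw [div_le_div_iff₀ (hdenom hp hv₁) (hdenom hp hv₂)]
      nlinarith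
    have : lam * v₁ < lam * v₂ := by nlinarith
    simp only [hh]
    nlinarith
  -- continuity of h on [0,∞)
  have hcont : ContinuousOn h (Set.Ici 0) := by
    have hI : ContinuousOn (fun v => ∫ p, J v p ∂μ) (Set.Ici 0) := by
      intro v hv
      refine ContinuousWithinAt.mono ?_ (le_refl _ : Set.Ici (0:ℝ) ⊆ Set.Ici 0)
      unfold ContinuousWithinAt
      refine tendsto_integral_filter_of_dominated_convergence (fun _ => (1:ℝ)) ?_ ?_ (integrable_const 1) ?_
      · exact Filter.Eventually.of_forall fun w => (hmeas w).aestronglyMeasurable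
      · filter_upwards [self_mem_nhdsWithin] with w hw
        filter_upwards [hsupp] with p hp
        rw [Real.norm_eq_abs, abs_of_nonneg (hbound hp hw).1]
        exact (hbound hp hw).2
      · filter_upwards [hsupp] with p hp
        have hc : ContinuousOn (fun w : ℝ => J w p) (Set.Ici 0) := by
          refine ContinuousOn.div ((continuous_id.mul continuous_const).continuousOn)
            ((continuous_const.add (continuous_const.mul continuous_id)).continuousOn) ?_
          intro w hw; exact ne_of_gt (hdenom hp hw)
        exact (hc v hv)
    exact (continuousOn_const.mul continuousOn_id).add (continuousOn_const.mul hI)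
  -- existence of v with h v = 1 on (0, 1/lam]
  have hM : (0:ℝ) < 1 / lam := by positivity
  have h0 : h 0 = 0 := by simp [hh, hJ]
  have hhM : 1 ≤ h (1 / lam) := by
    have hI0 : 0 ≤ ∫ p, J (1/lam) p ∂μ := by
      refine integral_nonneg_of_ae ?_
      filter_upwards [hsupp] with p hp
      exact (hbound hp hM.le).1
    have : lam * (1 / lam) = 1 := by field_simp
    simp only [hh]
    nlinarith
  obtain ⟨v, hvmem, hv1⟩ : ∃ v ∈ Set.Icc (0:ℝ) (1/lam), h v = 1 := by
    have := intermediate_value_Icc hM.le (hcont.mono (Set.Icc_subset_Ici_self))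
    have h1mem : (1:ℝ) ∈ Set.Icc (h 0) (h (1/lam)) := by
      rw [h0]; exact ⟨zero_le_one, hhM⟩
    obtain ⟨v, hv, hveq⟩ := this h1mem
    exact ⟨v, hv, hveq⟩
  have hvpos : 0 < v := by
    rcases hvmem.1.lt_or_eq with h' | h'
    · exact h'
    · exfalso; rw [← h', h0] at hv1; norm_num at hv1
  -- relation between h v = 1 and the fixed point equation
  have key : ∀ w : ℝ, 0 < w →
      (w = 1 / (lam + alpha * ∫ p, p / (1 + p * w) ∂μ) ↔ h w = 1) := by
    intro w hw
    have hIw : (∫ p, J w p ∂μ) = w * ∫ p, p / (1 + p * w) ∂μ := by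
      rw [← integral_const_mul]
      congr 1 with p
      exact mul_div_assoc w p _
    have hInn : 0 ≤ ∫ p, p / (1 + p * w) ∂μ := by
      refine integral_nonneg_of_ae ?_
      filter_upwards [hsupp] with p hp
      exact div_nonneg hp (le_of_lt (hdenom hp hw.le))
    have hD : (0:ℝ) < lam + alpha * ∫ p, p / (1 + p * w) ∂μ := by nlinarith
    rw [eq_div_iff (ne_of_gt hD)]
    simp only [hh, hIw]
    constructor <;> intro h' <;> nlinarith
  refine ⟨v, ⟨hvpos, (key v hvpos).mpr hv1⟩, ?_⟩
  rintro w ⟨hwpos, hweq⟩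
  exact hmono.injOn hwpos.le hvpos.le (((key w hwpos).mp hweq).trans hv1.symm)
end

section
/- Let λ, α, ρ, Δ > 0. Let p₁, p₂ be nonnegative random variables on a probability space, each with finite second moment. Suppose v₁, v₂ > 0, v̂₁, v̂₂ ∈ ℝ, a vector m ∈ ℝ², a vector m̂ ∈ ℝ², and symmetric 2×2 matrices Q (invertible) and Q̂ satisfy the self-consistent system: writing V = diag(v₁,v₂), V̂ = diag(v̂₁,v̂₂), P = diag(p₁,p₂), G(P) = (I₂ + P·V)⁻¹·P, 𝟙 ∈ ℝ² the all-ones vector, B = 𝟙·mᵀ·Q⁻¹ − I₂ and v⋆ = ρ − mᵀQ⁻¹m, the equations m = ρ·(λI₂ + V̂)⁻¹·m̂, Q = (λI₂ + V̂)⁻¹·(ρ·m̂m̂ᵀ + Q̂)·((λI₂ + V̂)⁻¹)ᵀ, V = (λI₂ + V̂)⁻¹, m̂ = α·E[G(P)]·𝟙, Q̂ = α·E[G(P)·((v⋆+Δ)·𝟙𝟙ᵀ + B·Q·Bᵀ)·G(P)ᵀ], V̂ = α·E[G(P)] hold. Then for each i ∈ {1,2}: (i) v_i = 1/(λ + α·E[p_i/(1+p_i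 v_i)]); (ii) m_i = ρ·(1 − λ·v_i); (iii) if α·E[(p_i v_i/(1+p_i v_i))²] ≠ 1 then Q_{ii} = (m_i²/ρ + α·E[(p_i v_i/(1+p_i v_i))²]·(ρ + Δ − 2m_i)) / (1 − α·E[(p_i v_i/(1+p_i v_i))²]); and (iv) if α·E[(p₁v₁/(1+p₁v₁))·(p₂v₂/(1+p₂v₂))] ≠ 1 then Q_{12} = (m₁m₂/ρ + α·E[(p₁v₁/(1+p₁v₁))·(p₂v₂/(1+p₂v₂))]·(ρ + Δ − m₁ − m₂)) / (1 − α·E[(p₁v₁/(1+p₁v₁))·(p₂v₂/(1+p₂v₂))]). -/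
open MeasureTheory Matrix

/-- Reduction of the 2×2 matrix state-evolution equations for pair resampling in
ridge regression to closed-form scalar equations for the overlaps. -/
theorem stmt2
    {Ω : Type*} [MeasurableSpace Ω] (P : Measure Ω) [IsProbabilityMeasure P]
    (lam alpha rho Delta : ℝ)
    (hlam : 0 < lam) (halpha : 0 < alpha) (hrho : 0 < rho) (hDelta : 0 < Delta)
    -- the nonnegative sampling weights, with finite second moment
    (p : Fin 2 → Ω → ℝ)
    (hpmeas : ∀ i, Measurable (p i))
    (hpnonneg : ∀ i ω, 0 ≤ p i ω)
    (hpmom : ∀ i, Integrable (fun ω => (p i ω) ^ 2) P)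
    -- the overlaps
    (v vhat : Fin 2 → ℝ) (hvpos : ∀ i, 0 < v i)
    (m mhat : Fin 2 → ℝ)
    (Q Qhat : Matrix (Fin 2) (Fin 2) ℝ)
    (hQsymm : Q.IsSymm) (hQinv : IsUnit Q.det) (hQhatsymm : Qhat.IsSymm)
    -- auxiliary definitions
    (Vmat Vhatmat : Matrix (Fin 2) (Fin 2) ℝ)
    (hVmat : Vmat = Matrix.diagonal v)
    (hVhatmat : Vhatmat = Matrix.diagonal vhat)
    (G : Ω → Matrix (Fin 2) (Fin 2) ℝ)
    (hG : ∀ ω, G ω =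
      (1 + Matrix.diagonal (fun i => p i ω) * Vmat)⁻¹ * Matrix.diagonal (fun i => p i ω))
    (ones : Fin 2 → ℝ) (hones : ones = fun _ => 1)
    (B : Matrix (Fin 2) (Fin 2) ℝ)
    (hB : B = (Matrix.of fun _ j => m j : Matrix (Fin 2) (Fin 2) ℝ) * Q⁻¹ - 1)
    (vstar : ℝ) (hvstar : vstar = rho - m ⬝ᵥ (Q⁻¹ *ᵥ m))
    -- the self-consistent equations (expectations of matrices taken entrywise)
    (heqm : m = rho • (((lam • (1 : Matrix (Fin 2) (Fin 2) ℝ) + Vhatmat)⁻¹) *ᵥ mhat))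
    (heqQ : Q = (lam • (1 : Matrix (Fin 2) (Fin 2) ℝ) + Vhatmat)⁻¹ *
      (rho • Matrix.vecMulVec mhat mhat + Qhat) *
      ((lam • (1 : Matrix (Fin 2) (Fin 2) ℝ) + Vhatmat)⁻¹)ᵀ)
    (heqV : Vmat = (lam • (1 : Matrix (Fin 2) (Fin 2) ℝ) + Vhatmat)⁻¹)
    (heqmhat : mhat =
      alpha • ((Matrix.of fun i j => ∫ ω, G ω i j ∂P : Matrix (Fin 2) (Fin 2) ℝ) *ᵥ ones))
    (heqQhat : Qhat = alpha • (Matrix.of fun i j =>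
      ∫ ω, (G ω * ((vstar + Delta) • (Matrix.of fun _ _ => (1 : ℝ) : Matrix (Fin 2) (Fin 2) ℝ)
        + B * Q * Bᵀ) * (G ω)ᵀ) i j ∂P : Matrix (Fin 2) (Fin 2) ℝ))
    (heqVhat : Vhatmat =
      alpha • (Matrix.of fun i j => ∫ ω, G ω i j ∂P : Matrix (Fin 2) (Fin 2) ℝ)) :
    -- (i) fixed-point equations for the vᵢ
    (∀ i, v i = 1 / (lam + alpha * ∫ ω, p i ω / (1 + p i ω * v i) ∂P)) ∧
    -- (ii) closed form for the mᵢ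
    (∀ i, m i = rho * (1 - lam * v i)) ∧
    -- (iii) closed form for the diagonal of Q
    (∀ i, alpha * (∫ ω, (p i ω * v i / (1 + p i ω * v i)) ^ 2 ∂P) ≠ 1 →
      Q i i = (m i ^ 2 / rho
          + alpha * (∫ ω, (p i ω * v i / (1 + p i ω * v i)) ^ 2 ∂P) * (rho + Delta - 2 * m i))
        / (1 - alpha * (∫ ω, (p i ω * v i / (1 + p i ω * v i)) ^ 2 ∂P))) ∧
    -- (iv) closed form for the off-diagonal entry of Q
    (alpha * (∫ ω, (p 0 ω * v 0 / (1 + p 0 ω * v 0)) * (p 1 ω * v 1 / (1 + p 1 ω * v 1)) ∂P) ≠ 1 →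
      Q 0 1 = (m 0 * m 1 / rho
          + alpha * (∫ ω, (p 0 ω * v 0 / (1 + p 0 ω * v 0)) * (p 1 ω * v 1 / (1 + p 1 ω * v 1)) ∂P)
            * (rho + Delta - m 0 - m 1))
        / (1 - alpha *
            (∫ ω, (p 0 ω * v 0 / (1 + p 0 ω * v 0)) * (p 1 ω * v 1 / (1 + p 1 ω * v 1)) ∂P))) := by
  -- abbreviations
  set g : Fin 2 → Ω → ℝ := fun i ω => p i ω / (1 + p i ω * v i) with hgdef
  have hden : ∀ i ω, (0:ℝ) < 1 + p i ω * v i := fun i ω => by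
    have := mul_nonneg (hpnonneg i ω) (hvpos i).le; linarith
  -- G is diagonal
  have hGd : ∀ ω, G ω = Matrix.diagonal (fun i => g i ω) := by
    intro ω
    have hA : (1 : Matrix (Fin 2) (Fin 2) ℝ) + Matrix.diagonal (fun i => p i ω) * Vmat
        = Matrix.diagonal (fun i => 1 + p i ω * v i) := by
      rw [hVmat, Matrix.diagonal_mul_diagonal, ← Matrix.diagonal_one, Matrix.diagonal_add]
    have hinv : ((1 : Matrix (Fin 2) (Fin 2) ℝ) + Matrix.diagonal (fun i => p i ω) * Vmat)⁻¹
        = Matrix.diagonal (fun i => (1 + p i ω * v i)⁻¹) := by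
      rw [hA]
      apply Matrix.inv_eq_right_inv
      rw [Matrix.diagonal_mul_diagonal, ← Matrix.diagonal_one]
      rw [show (fun i => (1 + p i ω * v i) * (1 + p i ω * v i)⁻¹) = fun _ : Fin 2 => (1:ℝ) from
        funext fun i => mul_inv_cancel₀ (hden i ω).ne']
    rw [hG, hinv, Matrix.diagonal_mul_diagonal]
    simp only [hgdef, div_eq_inv_mul]
  -- entries of the integrated G matrix
  have hEG : (Matrix.of fun i j => ∫ ω, G ω i j ∂P : Matrix (Fin 2) (Fin 2) ℝ)
      = Matrix.diagonal (fun i => ∫ ω, g i ω ∂P) := by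
    ext i j
    by_cases h : i = j
    · subst h; simp [hGd, Matrix.diagonal_apply_eq]
    · simp [hGd, Matrix.diagonal_apply_ne _ h, h]
  -- vhat i = alpha * ∫ g i
  have hvhat : ∀ i, vhat i = alpha * ∫ ω, g i ω ∂P := by
    intro i
    have := congrFun (congrFun (hVhatmat.symm.trans heqVhat) i) i
    simpa [Matrix.diagonal_apply_eq, hEG] using this
  -- v i * (lam + vhat i) = 1
  have hlvne : ∀ i, lam + vhat i ≠ 0 ∧ v i = (lam + vhat i)⁻¹ := by
    have h := heqV
    rw [hVmat, hVhatmat, show lam • (1 : Matrix (Fin 2) (Fin 2) ℝ) + Matrix.diagonal vhat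
      = Matrix.diagonal (fun i => lam + vhat i) by
        ext a b
        by_cases hab : a = b
        · subst hab; simp [Matrix.one_apply_eq]
        · simp [Matrix.one_apply_ne hab, Matrix.diagonal_apply_ne _ hab]] at h
    have hallne : ∀ j, lam + vhat j ≠ 0 := by
      intro j hne
      have hdet : (Matrix.diagonal (fun i => lam + vhat i) : Matrix (Fin 2) (Fin 2) ℝ).det = 0 := by
        rw [Matrix.det_diagonal]
        exact Finset.prod_eq_zero (Finset.mem_univ j) hne
      rw [Matrix.nonsing_inv_apply_not_isUnit _ (by simp [hdet])] at h
      have h0 := congrFun (congrFun h 0) 0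
      simp [Matrix.diagonal_apply_eq] at h0
      exact (hvpos 0).ne' h0
    have hinv : (Matrix.diagonal (fun i => lam + vhat i) : Matrix (Fin 2) (Fin 2) ℝ)⁻¹
        = Matrix.diagonal (fun i => (lam + vhat i)⁻¹) := by
      apply Matrix.inv_eq_right_inv
      rw [Matrix.diagonal_mul_diagonal, ← Matrix.diagonal_one]
      rw [show (fun i => (lam + vhat i) * (lam + vhat i)⁻¹) = fun _ : Fin 2 => (1:ℝ) from
        funext fun i => mul_inv_cancel₀ (hallne i)]
    rw [hinv] at h
    intro i
    have := congrFun (congrFun h i) i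
    simp only [Matrix.diagonal_apply_eq] at this
    exact ⟨hallne i, this⟩
  have hv1 : ∀ i, v i * (lam + vhat i) = 1 := by
    intro i
    obtain ⟨hne, hv⟩ := hlvne i
    rw [hv]
    exact inv_mul_cancel₀ hne
  simp only [hgdef] at hvhat
  -- part (i)
  have part1 : ∀ i, v i = 1 / (lam + alpha * ∫ ω, p i ω / (1 + p i ω * v i) ∂P) := by
    intro i
    obtain ⟨hne, hv⟩ := hlvne i
    rw [one_div, ← hvhat i]
    exact hv
  -- the inverse matrix is diagonal v
  have hVinv : (lam • (1 : Matrix (Fin 2) (Fin 2) ℝ) + Vhatmat)⁻¹ = Matrix.diagonal v :=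
    heqV.symm.trans hVmat
  -- mhat = vhat
  have hmhat_eq : ∀ i, mhat i = vhat i := by
    intro i
    have h := congrFun heqmhat i
    rw [hEG, hones] at h
    simp only [Pi.smul_apply, Matrix.mulVec_diagonal, smul_eq_mul, mul_one] at h
    rw [h, hvhat i]
  -- m i = rho * v i * mhat i
  have hm : ∀ i, m i = rho * (v i * mhat i) := by
    intro i
    have h := congrFun heqm i
    rw [hVinv] at h
    simpa only [Pi.smul_apply, Matrix.mulVec_diagonal, smul_eq_mul] using h
  -- part (ii)
  have part2 : ∀ i, m i = rho * (1 - lam * v i) := by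
    intro i
    have h1 := hv1 i
    have h2 := hm i
    rw [hmhat_eq i] at h2
    linear_combination h2 + rho * h1
  -- entrywise Q equation
  have hQd : ∀ i j, Q i j = v i * (rho * (mhat i * mhat j) + Qhat i j) * v j := by
    intro i j
    have h := congrFun (congrFun heqQ i) j
    rw [hVinv, Matrix.diagonal_transpose] at h
    rw [h, Matrix.mul_diagonal, Matrix.diagonal_mul]
    simp [Matrix.vecMulVec_apply]
  -- B Q Bᵀ
  have hQQinv : Q * Q⁻¹ = 1 := Matrix.mul_nonsing_inv Q hQinv
  have hQinvQ : Q⁻¹ * Q = 1 := Matrix.nonsing_inv_mul Q hQinv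
  have hBT : Bᵀ = Q⁻¹ * (Matrix.of fun _ j => m j : Matrix (Fin 2) (Fin 2) ℝ)ᵀ - 1 := by
    rw [hB, Matrix.transpose_sub, Matrix.transpose_mul, Matrix.transpose_one,
      Matrix.transpose_nonsing_inv, hQsymm]
  have hBQB : B * Q * Bᵀ =
      (Matrix.of fun _ j => m j : Matrix (Fin 2) (Fin 2) ℝ) * Q⁻¹
        * (Matrix.of fun _ j => m j : Matrix (Fin 2) (Fin 2) ℝ)ᵀ
      - (Matrix.of fun _ j => m j : Matrix (Fin 2) (Fin 2) ℝ)ᵀ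
      - (Matrix.of fun _ j => m j : Matrix (Fin 2) (Fin 2) ℝ) + Q := by
    have h1 : B * Q = (Matrix.of fun _ j => m j : Matrix (Fin 2) (Fin 2) ℝ) - Q := by
      rw [hB, sub_mul, one_mul, mul_assoc, hQinvQ, mul_one]
    rw [h1, hBT, sub_mul, mul_sub, mul_sub, mul_one, mul_one, ← mul_assoc Q Q⁻¹, hQQinv,
      one_mul, ← mul_assoc]
    abel
  have hBQBe : ∀ i j, (B * Q * Bᵀ) i j = (m ⬝ᵥ (Q⁻¹ *ᵥ m)) - m i - m j + Q i j := by
    intro i j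
    rw [hBQB]
    simp only [Matrix.sub_apply, Matrix.add_apply, Matrix.mul_apply, Matrix.mulVec,
      dotProduct, Fin.sum_univ_two, Matrix.transpose_apply, Matrix.of_apply]
    ring
  -- entries of the integrand of Qhat
  have hK : ∀ i j ω,
      (G ω * ((vstar + Delta) • (Matrix.of fun _ _ => (1 : ℝ) : Matrix (Fin 2) (Fin 2) ℝ)
        + B * Q * Bᵀ) * (G ω)ᵀ) i j
      = g i ω * g j ω * (rho + Delta - m i - m j + Q i j) := by
    intro i j ω
    rw [hGd, Matrix.diagonal_transpose, Matrix.mul_diagonal, Matrix.diagonal_mul]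
    rw [Matrix.add_apply, Matrix.smul_apply, hBQBe i j]
    simp only [Matrix.of_apply, smul_eq_mul, hvstar]
    ring
  -- entries of Qhat
  have hQhate : ∀ i j, Qhat i j
      = alpha * ((∫ ω, g i ω * g j ω ∂P) * (rho + Delta - m i - m j + Q i j)) := by
    intro i j
    have h := congrFun (congrFun heqQhat i) j
    simp only [Matrix.smul_apply, Matrix.of_apply, smul_eq_mul] at h
    rw [h]
    congr 1
    rw [show (fun ω => (G ω * ((vstar + Delta) • (Matrix.of fun _ _ => (1 : ℝ) :
        Matrix (Fin 2) (Fin 2) ℝ) + B * Q * Bᵀ) * (G ω)ᵀ) i j)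
      = fun ω => (g i ω * g j ω) * (rho + Delta - m i - m j + Q i j) from
        funext fun ω => hK i j ω, integral_mul_const]
  -- relating the statement integrals to ∫ g i g j
  have hint : ∀ i j, (∫ ω, (p i ω * v i / (1 + p i ω * v i))
        * (p j ω * v j / (1 + p j ω * v j)) ∂P)
      = (v i * v j) * ∫ ω, g i ω * g j ω ∂P := by
    intro i j
    rw [← integral_const_mul]
    congr 1
    funext ω
    simp only [hgdef]
    ring
  -- the generic closed form
  have main : ∀ i j, alpha * (∫ ω, (p i ω * v i / (1 + p i ω * v i))
        * (p j ω * v j / (1 + p j ω * v j)) ∂P) ≠ 1 →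
      Q i j = (m i * m j / rho
          + alpha * (∫ ω, (p i ω * v i / (1 + p i ω * v i))
              * (p j ω * v j / (1 + p j ω * v j)) ∂P) * (rho + Delta - m i - m j))
        / (1 - alpha * (∫ ω, (p i ω * v i / (1 + p i ω * v i))
            * (p j ω * v j / (1 + p j ω * v j)) ∂P)) := by
    intro i j hs
    have hQij := hQd i j
    rw [hQhate i j] at hQij
    have hmm : m i * m j / rho = rho * (v i * mhat i * (v j * mhat j)) := by
      rw [hm i, hm j]
      field_simp
    rw [eq_div_iff (sub_ne_zero_of_ne (Ne.symm hs)), hint i j, hmm]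
    linear_combination hQij
  refine ⟨part1, part2, ?_, ?_⟩
  · intro i hs
    have hsq : (∫ ω, (p i ω * v i / (1 + p i ω * v i)) ^ 2 ∂P)
        = ∫ ω, (p i ω * v i / (1 + p i ω * v i)) * (p i ω * v i / (1 + p i ω * v i)) ∂P := by
      congr 1
      funext ω
      ring
    rw [hsq] at hs ⊢
    rw [main i i hs]
    congr 1 <;> ring
  · exact main 0 1
end

section
/- Let λ, α, ρ, Δ > 0 and let p₁, p₂ be nonnegative integrable random variables. For i ∈ {1,2} suppose v_i > 0 satisfies v_i = 1/(λ + α·E[p_i/(1+p_i v_i)]) and set m_i := ρ·(1 − λ·v_i) and a_i := E[p_i v_i/(1+p_i v_i)]. Suppose q₁₂ satisfies q₁₂ = (m₁m₂/ρ + α·a₁·a₂·(ρ + Δ − m₁ − m₂)) / (1 − α·a₁·a₂) and α·ρ² ≠ m₁·m₂. Then q₁₂ = m₁m₂·(αρ + ρ + Δ − m₁ − m₂)/(αρ² − m₁m₂). -/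
open MeasureTheory

/-- Simplification of the cross-overlap `q₁₂` between two estimators trained with
independent sampling weights in the ridge-regression state evolution. -/
theorem stmt3
    {Ω : Type*} [MeasurableSpace Ω] (P : Measure Ω) [IsProbabilityMeasure P]
    (lam alpha rho Delta : ℝ)
    (hlam : 0 < lam) (halpha : 0 < alpha) (hrho : 0 < rho) (hDelta : 0 < Delta)
    (p : Fin 2 → Ω → ℝ)
    (hpmeas : ∀ i, Measurable (p i))
    (hpnonneg : ∀ i ω, 0 ≤ p i ω)
    (hpint : ∀ i, Integrable (p i) P)
    (v : Fin 2 → ℝ) (hvpos : ∀ i, 0 < v i)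
    (hvfix : ∀ i, v i = 1 / (lam + alpha * ∫ ω, p i ω / (1 + p i ω * v i) ∂P))
    (m : Fin 2 → ℝ) (hm : ∀ i, m i = rho * (1 - lam * v i))
    (a : Fin 2 → ℝ) (ha : ∀ i, a i = ∫ ω, p i ω * v i / (1 + p i ω * v i) ∂P)
    (q12 : ℝ)
    (hq12 : q12 = (m 0 * m 1 / rho + alpha * a 0 * a 1 * (rho + Delta - m 0 - m 1))
      / (1 - alpha * a 0 * a 1))
    (hne : alpha * rho ^ 2 ≠ m 0 * m 1) :
    q12 = m 0 * m 1 * (alpha * rho + rho + Delta - m 0 - m 1) / (alpha * rho ^ 2 - m 0 * m 1) := by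
  have key : ∀ i, rho * (alpha * a i) = m i := by
    intro i
    set I := ∫ ω, p i ω / (1 + p i ω * v i) ∂P with hI
    have haI : a i = v i * I := by
      rw [ha i, hI, ← integral_const_mul]
      congr 1; ext ω; ring
    have hD : (lam + alpha * I) ≠ 0 := by
      intro h
      have := hvfix i
      rw [← hI, h, div_zero] at this
      exact (hvpos i).ne' this
    have hvD : v i * (lam + alpha * I) = 1 := by
      rw [hvfix i, ← hI, one_div, inv_mul_cancel₀ hD]
    rw [hm i, haI]
    nlinarith [hvD]
  have h0 := key 0
  have h1 := key 1
  have ha0 : a 0 = m 0 / (alpha * rho) := by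
    field_simp
    nlinarith [h0]
  have ha1 : a 1 = m 1 / (alpha * rho) := by
    field_simp
    nlinarith [h1]
  have hne' : alpha * rho ^ 2 - m 0 * m 1 ≠ 0 := sub_ne_zero_of_ne hne
  rw [hq12, ha0, ha1]
  have h2 : 1 - alpha * (m 0 / (alpha * rho)) * (m 1 / (alpha * rho)) ≠ 0 := by
    intro h
    apply hne'
    field_simp at h
    nlinarith [h]
  rw [div_eq_div_iff h2 hne']
  field_simp
  ring
end

section
/- Let λ, α, ρ, Δ > 0, let v > 0 be the unique positive solution of v = 1/(λ + α/(1+v)), and set m := ρ·(1 − λ·v). Then αρ² > m², the quantity α·(v/(1+v))² is strictly less than 1, and the following two identities hold: (m²/ρ + α·(v/(1+v))²·(ρ + Δ − 2m)) / (1 − α·(v/(1+v))²) = m²·(αρ + ρ + Δ − 2m)/(αρ² − m²), and (m²/ρ + α·(v/(1+v))²·(ρ − 2m)) / (1 − α·(v/(1+v))²) = m²·(αρ + ρ − 2m)/(αρ² − m²). -/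
set_option maxHeartbeats 1000000 in
/-- Closed-form expressions for the residual-resampling overlaps `q` and `q₁₂`
in the ridge-regression state evolution. -/
theorem stmt4 (lam alpha rho Delta v m : ℝ)
    (hlam : 0 < lam) (halpha : 0 < alpha) (hrho : 0 < rho) (hDelta : 0 < Delta)
    (hvpos : 0 < v) (hvfix : v = 1 / (lam + alpha / (1 + v)))
    (hvuniq : ∀ w : ℝ, 0 < w → w = 1 / (lam + alpha / (1 + w)) → w = v)
    (hm : m = rho * (1 - lam * v)) :
    alpha * rho ^ 2 > m ^ 2 ∧
    alpha * (v / (1 + v)) ^ 2 < 1 ∧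
    (m ^ 2 / rho + alpha * (v / (1 + v)) ^ 2 * (rho + Delta - 2 * m))
        / (1 - alpha * (v / (1 + v)) ^ 2)
      = m ^ 2 * (alpha * rho + rho + Delta - 2 * m) / (alpha * rho ^ 2 - m ^ 2) ∧
    (m ^ 2 / rho + alpha * (v / (1 + v)) ^ 2 * (rho - 2 * m))
        / (1 - alpha * (v / (1 + v)) ^ 2)
      = m ^ 2 * (alpha * rho + rho - 2 * m) / (alpha * rho ^ 2 - m ^ 2) := by
  have h1v : (0:ℝ) < 1 + v := by linarith
  have hne1 : (1:ℝ) + v ≠ 0 := ne_of_gt h1v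
  have hD : (0:ℝ) < lam + alpha / (1 + v) := by positivity
  have h : v * (lam + alpha / (1 + v)) = 1 := by
    nth_rewrite 1 [hvfix]
    exact one_div_mul_cancel (ne_of_gt hD)
  have hE2 : lam * v * (1 + v) + alpha * v = 1 + v := by
    field_simp at h; linarith [h]
  have hkey : m * (1 + v) = rho * alpha * v := by
    rw [hm]; nlinarith [hE2]
  have hm2 : m ^ 2 * (1 + v) ^ 2 = rho ^ 2 * alpha ^ 2 * v ^ 2 := by
    linear_combination (m * (1 + v) + rho * alpha * v) * hkey
  have hav : alpha * v < 1 + v := by nlinarith [mul_pos (mul_pos hlam hvpos) h1v]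
  have hαs2 : alpha * (v / (1 + v)) ^ 2 = m ^ 2 / (alpha * rho ^ 2) := by
    rw [div_pow, eq_div_iff (by positivity : alpha * rho ^ 2 ≠ 0), mul_comm alpha,
      div_mul_eq_mul_div, div_mul_eq_mul_div, div_eq_iff (pow_ne_zero 2 hne1)]
    linear_combination -hm2
  have hgt : alpha * rho ^ 2 > m ^ 2 := by
    have h1 : alpha * v ^ 2 < (1 + v) ^ 2 := by nlinarith
    nlinarith [hm2, mul_pos halpha (mul_pos hrho hrho), sq_nonneg (1+v)]
  have hlt : alpha * (v / (1 + v)) ^ 2 < 1 := by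
    rw [hαs2, div_lt_one (by positivity)]; linarith
  have hdpos : (0:ℝ) < 1 - m ^ 2 / (alpha * rho ^ 2) := by
    rw [sub_pos, div_lt_one (by positivity)]; linarith
  refine ⟨hgt, hlt, ?_, ?_⟩ <;>
  · rw [hαs2, div_eq_div_iff (ne_of_gt hdpos) (by nlinarith : alpha * rho ^ 2 - m ^ 2 ≠ 0)]
    field_simp
    ring
end

section
/- Let λ > 0 and 0 < r ≤ 1, and define v_r(α) := (1 − λ − αr + √((αr + λ − 1)² + 4λ))/(2λ) for α > 0. Then v_r(α) − 1/(rα) − (1−λ)/(r²α²) = O(1/α³) as α → ∞. -/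
set_option maxHeartbeats 1000000 in
/-- Second-order large-`α` expansion of the subsampling overlap at rate `r`:
`v_r(α) = 1/(rα) + (1−λ)/(r²α²) + O(1/α³)` as `α → ∞`. -/
theorem stmt7 (lam r : ℝ) (hlam : 0 < lam) (hr : 0 < r) (hr1 : r ≤ 1)
    (v : ℝ → ℝ)
    (hv : ∀ α : ℝ, 0 < α →
      v α = (1 - lam - α * r + Real.sqrt ((α * r + lam - 1) ^ 2 + 4 * lam)) / (2 * lam)) :
    ∃ C > 0, ∃ α₀ : ℝ, ∀ α ≥ α₀,
      |v α - 1 / (r * α) - (1 - lam) / (r ^ 2 * α ^ 2)| ≤ C / α ^ 3 := by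
  refine ⟨(2 * (1 - lam) ^ 2 + 8 * lam + 1) / r ^ 3,
    div_pos (by positivity) (pow_pos hr 3),
    (2 * |1 - lam| + 2 * Real.sqrt lam + 2) / r, ?_⟩
  intro α hα
  have hα0 : 0 < α := lt_of_lt_of_le (div_pos (by positivity) hr) hα
  have hvα := hv α hα0
  rw [ge_iff_le, div_le_iff₀ hr] at hα
  set u : ℝ := 1 - lam with hu
  set s : ℝ := r * α with hs'
  set t : ℝ := α * r + lam - 1 with ht
  set D : ℝ := Real.sqrt (t ^ 2 + 4 * lam) with hD'
  have hsqL : Real.sqrt lam ^ 2 = lam := Real.sq_sqrt hlam.le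
  have hsqL0 : 0 ≤ Real.sqrt lam := Real.sqrt_nonneg _
  have hs : 2 * |u| + 2 * Real.sqrt lam + 2 ≤ s := by rw [hs']; linarith [hα]
  have habs1 : u ≤ |u| := le_abs_self u
  have habs2 : -u ≤ |u| := neg_le_abs u
  have hts : t = s - u := by rw [ht, hs', hu]; ring
  have ht0 : 0 < t := by
    rw [hts]; have h0 : 0 ≤ |u| := abs_nonneg u; linarith
  have htL : Real.sqrt lam ≤ t := by rw [hts]; linarith [abs_nonneg u]
  have htlam : lam ≤ t ^ 2 := by nlinarith [hsqL, hsqL0, htL]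
  have hst : s ≤ 2 * t := by rw [hts]; linarith [abs_nonneg u]
  have hs0 : 0 < s := by linarith [abs_nonneg u, hsqL0]
  have htne : t ≠ 0 := ht0.ne'
  have hsne : s ≠ 0 := hs0.ne'
  have hvα' : v α = (D - t) / (2 * lam) := by rw [hvα, ht]; ring
  -- upper bound on D
  have hDub : D ≤ t + 2 * lam / t := by
    have hexp : (t + 2 * lam / t) ^ 2 = t ^ 2 + 4 * lam + (2 * lam / t) ^ 2 := by
      field_simp; ring
    have hle : t ^ 2 + 4 * lam ≤ (t + 2 * lam / t) ^ 2 := by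
      rw [hexp]; nlinarith [sq_nonneg (2 * lam / t)]
    have h := Real.sqrt_le_sqrt hle
    rwa [Real.sqrt_sq (by positivity : (0:ℝ) ≤ t + 2 * lam / t)] at h
  -- lower bound on D
  have hsmall : 2 * lam ^ 2 / t ^ 3 ≤ 2 * lam / t := by
    rw [div_le_div_iff₀ (by positivity) ht0]
    nlinarith [mul_le_mul_of_nonneg_left htlam (mul_pos hlam ht0).le]
  have hL0 : 0 ≤ t + 2 * lam / t - 2 * lam ^ 2 / t ^ 3 := by linarith
  have hDlb : t + 2 * lam / t - 2 * lam ^ 2 / t ^ 3 ≤ D := by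
    have hexp : (t + 2 * lam / t - 2 * lam ^ 2 / t ^ 3) ^ 2
        = t ^ 2 + 4 * lam + 4 * lam ^ 4 / t ^ 6 - 8 * lam ^ 3 / t ^ 4 := by
      field_simp; ring
    have hle : (t + 2 * lam / t - 2 * lam ^ 2 / t ^ 3) ^ 2 ≤ t ^ 2 + 4 * lam := by
      rw [hexp]
      have : 4 * lam ^ 4 / t ^ 6 ≤ 8 * lam ^ 3 / t ^ 4 := by
        rw [div_le_div_iff₀ (by positivity) (by positivity)]
        nlinarith [mul_le_mul_of_nonneg_left htlam (by positivity : (0:ℝ) ≤ 4*lam^3*t^4), mul_pos (mul_pos (mul_pos (mul_pos hlam hlam) hlam) (pow_pos ht0 3)) (pow_pos ht0 3)]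
      linarith
    have h := Real.sqrt_le_sqrt hle
    rwa [Real.sqrt_sq hL0] at h
  have h2lam : (0:ℝ) < 2 * lam := by linarith
  have h1 : v α ≤ 1 / t := by
    rw [hvα', div_le_iff₀ h2lam]
    have : 1 / t * (2 * lam) = 2 * lam / t := by ring
    linarith [hDub]
  have h2 : 1 / t - lam / t ^ 3 ≤ v α := by
    rw [hvα', le_div_iff₀ h2lam]
    have : (1 / t - lam / t ^ 3) * (2 * lam) = 2 * lam / t - 2 * lam ^ 2 / t ^ 3 := by ring
    linarith [hDlb]
  -- rewrite goal fractions in terms of s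
  have hsq : r ^ 2 * α ^ 2 = s ^ 2 := by rw [hs']; ring
  have hcube : (2 * u ^ 2 + 8 * lam + 1) / r ^ 3 / α ^ 3
      = (2 * u ^ 2 + 8 * lam + 1) / s ^ 3 := by
    rw [hs', div_div]; congr 1; ring
  rw [hsq, hcube]
  -- exact fraction identities
  have eqU : 1 / t - 1 / s - u / s ^ 2 = u ^ 2 / (s ^ 2 * t) := by
    rw [hts]
    have hsu : s - u ≠ 0 := by rw [← hts]; exact htne
    field_simp; ring
  have eqL : 1 / t - lam / t ^ 3 - 1 / s - u / s ^ 2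
      = (u ^ 2 * t ^ 2 - lam * s ^ 2) / (s ^ 2 * t ^ 3) := by
    rw [hts]
    have hsu : s - u ≠ 0 := by rw [← hts]; exact htne
    field_simp; ring
  have ineqU : u ^ 2 / (s ^ 2 * t) ≤ (2 * u ^ 2 + 8 * lam + 1) / s ^ 3 := by
    rw [div_le_div_iff₀ (by positivity) (by positivity)]
    nlinarith [mul_nonneg (mul_nonneg (sq_nonneg u) (sq_nonneg s)) (by linarith : (0:ℝ) ≤ 2 * t - s),
      mul_pos (mul_pos (mul_pos hs0 hs0) ht0) hlam, mul_pos (mul_pos hs0 hs0) ht0]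
  have ineqL : -((2 * u ^ 2 + 8 * lam + 1) / s ^ 3)
      ≤ (u ^ 2 * t ^ 2 - lam * s ^ 2) / (s ^ 2 * t ^ 3) := by
    rw [← neg_div, div_le_div_iff₀ (by positivity) (by positivity)]
    have h8 : s ^ 3 ≤ 8 * t ^ 3 := by nlinarith [pow_le_pow_left₀ hs0.le hst 3]
    nlinarith [mul_nonneg (mul_nonneg (sq_nonneg u) (sq_nonneg t)) (pow_pos hs0 3).le,
      mul_nonneg (mul_nonneg (by positivity : (0:ℝ) ≤ 2 * u ^ 2 + 1) (sq_nonneg s)) (pow_pos ht0 3).le,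
      mul_nonneg (mul_nonneg hlam.le (sq_nonneg s)) (by linarith : (0:ℝ) ≤ 8 * t ^ 3 - s ^ 3)]
  rw [abs_le]
  constructor
  · linarith [h2, eqL ▸ ineqL]
  · linarith [h1, eqU ▸ ineqU]
end

section
/- Let λ, ρ, Δ > 0. For α > 0 define v(α) := (1 − λ − α + √((α + λ − 1)² + 4λ))/(2λ), m(α) := ρ·(1 − λ·v(α)), q(α) := m(α)²·(αρ + ρ + Δ − 2m(α))/(αρ² − m(α)²), and q₁₂(α) := m(α)²/ρ. Then q(α) − q₁₂(α) − Δ/α = O(1/α²) as α → ∞. -/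
/-- The frequentist variance of the ridge estimator, expressed through the
full-resampling overlaps of the state evolution, satisfies
`q(α) − q₁₂(α) = Δ/α + O(1/α²)` as `α → ∞`. -/
theorem stmt8 (lam rho Delta : ℝ) (hlam : 0 < lam) (hrho : 0 < rho) (hDelta : 0 < Delta)
    (v m q q12 : ℝ → ℝ)
    (hv : ∀ α : ℝ, 0 < α →
      v α = (1 - lam - α + Real.sqrt ((α + lam - 1) ^ 2 + 4 * lam)) / (2 * lam))
    (hm : ∀ α : ℝ, 0 < α → m α = rho * (1 - lam * v α))
    (hq : ∀ α : ℝ, 0 < α →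
      q α = m α ^ 2 * (α * rho + rho + Delta - 2 * m α) / (α * rho ^ 2 - m α ^ 2))
    (hq12 : ∀ α : ℝ, 0 < α → q12 α = m α ^ 2 / rho) :
    ∃ C > 0, ∃ α₀ : ℝ, ∀ α ≥ α₀, |q α - q12 α - Delta / α| ≤ C / α ^ 2 := by
  refine ⟨2 * (Delta * (1 + 4 * lam) + 2 * lam ^ 2 * rho), by positivity, 2 + 2 * lam, ?_⟩
  intro α hα
  have hα2 : (2 : ℝ) ≤ α := by linarith
  have hαpos : (0 : ℝ) < α := by linarith
  have hs : 0 < α + lam - 1 := by linarith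
  set R := Real.sqrt ((α + lam - 1) ^ 2 + 4 * lam) with hR
  -- lower bound on the square root
  have hR1 : α + lam - 1 ≤ R := by
    have h := Real.sqrt_le_sqrt (show (α + lam - 1) ^ 2 ≤ (α + lam - 1) ^ 2 + 4 * lam by
      linarith)
    rwa [Real.sqrt_sq hs.le] at h
  -- upper bound on the square root
  have hR2 : R ≤ α + lam - 1 + 2 * lam / (α + lam - 1) := by
    have ht : 0 ≤ α + lam - 1 + 2 * lam / (α + lam - 1) := by positivity
    have hsq : (α + lam - 1) ^ 2 + 4 * lam ≤ (α + lam - 1 + 2 * lam / (α + lam - 1)) ^ 2 := by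
      have h1 : 2 * lam / (α + lam - 1) * (α + lam - 1) = 2 * lam := by
        field_simp
      nlinarith [sq_nonneg (2 * lam / (α + lam - 1))]
    calc R ≤ Real.sqrt ((α + lam - 1 + 2 * lam / (α + lam - 1)) ^ 2) :=
          Real.sqrt_le_sqrt hsq
      _ = _ := Real.sqrt_sq ht
  set e := lam * v α with hedef
  have heval : e = (R - (α + lam - 1)) / 2 := by
    rw [hedef, hv α hαpos, ← hR]
    field_simp
    ring
  have he0 : 0 ≤ e := by rw [heval]; linarith
  have heub : e ≤ lam / (α + lam - 1) := by
    have h2 : 2 * lam / (α + lam - 1) = 2 * (lam / (α + lam - 1)) := by ring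
    rw [heval]; linarith
  have heα : α * e ≤ 2 * lam := by
    have h1 : lam / (α + lam - 1) ≤ 2 * lam / α := by
      rw [div_le_div_iff₀ hs hαpos]; nlinarith
    have h2 : e ≤ 2 * lam / α := heub.trans h1
    calc α * e ≤ α * (2 * lam / α) := by nlinarith
      _ = 2 * lam := by field_simp
  have he1 : e ≤ 1 := by
    have : lam / (α + lam - 1) ≤ 1 := by
      rw [div_le_one hs]; linarith
    linarith
  have he2 : α * e ^ 2 ≤ 2 * lam ^ 2 := by
    have hel : e ≤ lam := by
      have : lam / (α + lam - 1) ≤ lam := by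
        rw [div_le_iff₀ hs]; nlinarith
      linarith
    calc α * e ^ 2 = (α * e) * e := by ring
      _ ≤ 2 * lam * lam := by nlinarith
      _ ≤ 2 * lam ^ 2 := by nlinarith
  -- positivity of denominators
  have hone : (1 - e) ^ 2 ≤ 1 := by nlinarith
  have hden : 0 < α - (1 - e) ^ 2 := by nlinarith
  have hmα : m α = rho * (1 - e) := by rw [hm α hαpos, hedef]
  have hden2 : 0 < α * rho ^ 2 - m α ^ 2 := by
    rw [hmα]
    have : α * rho ^ 2 - (rho * (1 - e)) ^ 2 = rho ^ 2 * (α - (1 - e) ^ 2) := by ring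
    rw [this]; positivity
  -- key algebraic identity
  have hkey : q α - q12 α - Delta / α =
      (Delta * ((α + 1) * (1 - e) ^ 2 - α) + α * rho * e ^ 2 * (1 - e) ^ 2) /
        (α * (α - (1 - e) ^ 2)) := by
    rw [hq α hαpos, hq12 α hαpos, hmα]
    have h1 : α * rho ^ 2 - (rho * (1 - e)) ^ 2 ≠ 0 := by
      rw [hmα] at hden2; linarith
    have h2 : α - (1 - e) ^ 2 ≠ 0 := ne_of_gt hden
    have h3 : rho ≠ 0 := ne_of_gt hrho
    have h4 : α ≠ 0 := ne_of_gt hαpos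
    field_simp
    ring
  rw [hkey]
  clear_value e
  clear hv hm hq hq12 hR1 hR2 heval hedef hR hkey hmα hden2
  clear v m q q12 R
  have hX1 : -(4 * lam) ≤ (α + 1) * (1 - e) ^ 2 - α := by
    nlinarith [sq_nonneg (1 - e), mul_nonneg hαpos.le (sq_nonneg e)]
  have hX2 : (α + 1) * (1 - e) ^ 2 - α ≤ 1 := by
    nlinarith [mul_nonneg hαpos.le (mul_nonneg he0 (by linarith : (0:ℝ) ≤ 2 - e))]
  have hY1 : 0 ≤ α * rho * e ^ 2 * (1 - e) ^ 2 := by positivity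
  have hY2 : α * rho * e ^ 2 * (1 - e) ^ 2 ≤ 2 * lam ^ 2 * rho := by
    have hx : 0 ≤ α * rho * e ^ 2 := by positivity
    calc α * rho * e ^ 2 * (1 - e) ^ 2 ≤ α * rho * e ^ 2 * 1 := by
          exact mul_le_mul_of_nonneg_left hone hx
      _ = rho * (α * e ^ 2) := by ring
      _ ≤ rho * (2 * lam ^ 2) := mul_le_mul_of_nonneg_left he2 hrho.le
      _ = 2 * lam ^ 2 * rho := by ring
  set N := Delta * ((α + 1) * (1 - e) ^ 2 - α) + α * rho * e ^ 2 * (1 - e) ^ 2 with hN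
  have hNbound : |N| ≤ Delta * (1 + 4 * lam) + 2 * lam ^ 2 * rho := by
    rw [abs_le, hN]
    constructor
    · linarith [mul_le_mul_of_nonneg_left hX1 hDelta.le, hY1,
        mul_nonneg hlam.le hDelta.le, mul_nonneg (mul_nonneg hlam.le hlam.le) hrho.le]
    · linarith [mul_le_mul_of_nonneg_left hX2 hDelta.le, hY2,
        mul_nonneg hlam.le hDelta.le, mul_nonneg (mul_nonneg hlam.le hlam.le) hrho.le]
  have hDlb : α ^ 2 / 2 ≤ α * (α - (1 - e) ^ 2) := by
    have h := mul_le_mul_of_nonneg_left hone hαpos.le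
    have h2 : 0 ≤ α * (α - 2) := mul_nonneg hαpos.le (by linarith)
    linarith [h, h2]
  have hDpos : 0 < α * (α - (1 - e) ^ 2) := by positivity
  rw [abs_div, abs_of_pos hDpos]
  calc |N| / (α * (α - (1 - e) ^ 2))
      ≤ (Delta * (1 + 4 * lam) + 2 * lam ^ 2 * rho) / (α ^ 2 / 2) := by
        exact div_le_div₀ (by positivity) hNbound (by positivity) hDlb
    _ = 2 * (Delta * (1 + 4 * lam) + 2 * lam ^ 2 * rho) / α ^ 2 := by
        rw [div_div_eq_mul_div]; ring
end

section
/- Let λ, ρ, Δ > 0 and 0 < r < 1. For α > 0 define v_r(α) := (1 − λ − αr + √((αr + λ − 1)² + 4λ))/(2λ), m_r(α) := ρ·(1 − λ·v_r(α)), q_r(α) := m_r(α)²·(αρr + ρ + Δ − 2m_r(α))/(αρ²r − m_r(α)²), and q₁₂,r(α) := m_r(α)²·(αρ + ρ + Δ − 2m_r(α))/(αρ² − m_r(α)²). Then (q_r(α) − q₁₂,r(α))/(1 − r) − Δ/(rα) = O(1/α²) as α → ∞. -/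
private lemma auxE (lam b s : ℝ) (hlam : 0 < lam) (hb : 2 ≤ b)
    (hs0 : 0 ≤ s) (hs2 : s^2 = b^2 + 4*lam) :
    0 < (s - b)/2 ∧ ((s - b)/2)*b ≤ lam := by
  have h1 : b < s := by nlinarith
  have h2 : s*b ≤ b^2 + 2*lam := by nlinarith
  exact ⟨by linarith, by nlinarith⟩

private lemma auxE2 (lam r α E b : ℝ) (hlam : 0 < lam) (hE0 : 0 < E)
    (hEb : E*b ≤ lam) (hb2 : α*r ≤ 2*b) (hαr4 : 4*lam ≤ α*r) :
    α*r*E ≤ 2*lam ∧ E ≤ 1/2 := by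
  have h1 : α*r*E ≤ 2*lam := by
    nlinarith [mul_nonneg (by linarith : (0:ℝ) ≤ 2*b - α*r) hE0.le]
  exact ⟨h1, by nlinarith⟩

set_option maxHeartbeats 1000000 in
private lemma auxBound (lam rho Delta r α E : ℝ)
    (hlam : 0 < lam) (hrho : 0 < rho) (hDelta : 0 < Delta) (hr : 0 < r) (hr1 : r < 1)
    (hα2 : 2 ≤ α) (hαr : 4 + 4*lam ≤ α*r)
    (hE0 : 0 < E) (hArE : α*r*E ≤ 2*lam) (hE2 : E ≤ 1/2) :
    |r*α^2*rho^3*(rho*(1-E))^2*E^2 + r*α^2*rho^4*Delta*(E^2-2*E)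
        + Delta*α*rho^2*(1+r)*(rho*(1-E))^2 - Delta*(rho*(1-E))^4|
      / (r*α*((α*rho^2*r - (rho*(1-E))^2)*(α*rho^2 - (rho*(1-E))^2)))
    ≤ 4*(4*rho^5*lam^2 + 4*rho^4*Delta*lam^2 + 4*rho^4*Delta*lam + 3*Delta*rho^4)
        /(r^3*rho^4) / α^2 := by
  have hα0 : 0 < α := by linarith
  set Kr : ℝ := 4*rho^5*lam^2 + 4*rho^4*Delta*lam^2 + 4*rho^4*Delta*lam + 3*Delta*rho^4
    with hKr
  set N := r*α^2*rho^3*(rho*(1-E))^2*E^2 + r*α^2*rho^4*Delta*(E^2-2*E)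
        + Delta*α*rho^2*(1+r)*(rho*(1-E))^2 - Delta*(rho*(1-E))^4 with hN
  set D1 := α*rho^2*r - (rho*(1-E))^2 with hD1def
  set D2 := α*rho^2 - (rho*(1-E))^2 with hD2def
  have h1e : (1-E)^2 ≤ 1 := by nlinarith
  have h1e4 : (1-E)^4 ≤ 1 := by nlinarith [mul_le_mul h1e h1e (sq_nonneg (1-E)) zero_le_one]
  have hm2le : (rho*(1-E))^2 ≤ rho^2 := by
    nlinarith [mul_le_mul_of_nonneg_left h1e (sq_nonneg rho)]
  have hαρ2 : 2*rho^2 ≤ α*rho^2*r := by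
    nlinarith [mul_nonneg (by linarith : (0:ℝ) ≤ α*r - 4) (sq_nonneg rho)]
  have hαρ2' : 2*rho^2 ≤ α*rho^2 := by
    nlinarith [mul_nonneg (by linarith : (0:ℝ) ≤ α - 2) (sq_nonneg rho)]
  have hD1 : α*rho^2*r/2 ≤ D1 := by rw [hD1def]; linarith
  have hD2 : α*rho^2/2 ≤ D2 := by rw [hD2def]; linarith
  have hD1pos : 0 < D1 := lt_of_lt_of_le (show (0:ℝ) < α*rho^2*r/2 by positivity) hD1
  have hD2pos : 0 < D2 := lt_of_lt_of_le (show (0:ℝ) < α*rho^2/2 by positivity) hD2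
  clear_value N D1 D2
  have hq1 : (α*r*E)^2 ≤ 4*lam^2 := by
    nlinarith [mul_pos (mul_pos hα0 hr) hE0]
  have hT1 : rho^5*((1-E)^2*(α*r*E)^2) ≤ rho^5*(1*(4*lam^2)) :=
    mul_le_mul_of_nonneg_left (mul_le_mul h1e hq1 (sq_nonneg _) zero_le_one)
      (pow_pos hrho 5).le
  have hT2 : rho^4*Delta*(α*r*E)^2 ≤ rho^4*Delta*(4*lam^2) :=
    mul_le_mul_of_nonneg_left hq1 (by positivity)
  have hrα : 0 < r*α := mul_pos hr hα0
  have hT3 : 2*rho^4*Delta*((r*α)*(α*r*E)) ≤ 4*rho^4*Delta*lam*α := by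
    have h1 : (r*α)*(α*r*E) ≤ (r*α)*(2*lam) := mul_le_mul_of_nonneg_left hArE hrα.le
    have h2 : (r*α)*(2*lam) ≤ α*(2*lam) := by
      nlinarith [mul_nonneg (mul_nonneg (by linarith : (0:ℝ) ≤ 1-r) hα0.le) hlam.le]
    linarith [mul_nonneg (mul_nonneg (pow_pos hrho 4).le hDelta.le)
      (by linarith : (0:ℝ) ≤ α*(2*lam) - (r*α)*(α*r*E))]
  have hT3' : 0 ≤ 2*rho^4*Delta*((r*α)*(α*r*E)) := by positivity
  have hT4 : Delta*α*rho^2*(1+r)*(rho*(1-E))^2 ≤ 2*Delta*α*rho^4 := by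
    have x1 : (0:ℝ) ≤ Delta*α*rho^2*(rho^2 - (rho*(1-E))^2) :=
      mul_nonneg (by positivity) (by linarith)
    have x2 : (0:ℝ) ≤ Delta*α*rho^2*((1-r)*(rho*(1-E))^2) :=
      mul_nonneg (by positivity) (mul_nonneg (by linarith) (sq_nonneg _))
    linarith [x1, x2]
  have hT4' : 0 ≤ Delta*α*rho^2*(1+r)*(rho*(1-E))^2 := by positivity
  have hT5 : Delta*(rho*(1-E))^4 ≤ Delta*rho^4*α := by
    have ha : rho^4*(1-E)^4 ≤ rho^4*1 := mul_le_mul_of_nonneg_left h1e4 (pow_pos hrho 4).le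
    have hb : (0:ℝ) ≤ rho^4 - (rho*(1-E))^4 := by nlinarith [ha]
    linarith [mul_nonneg hDelta.le hb,
      mul_nonneg (mul_nonneg hDelta.le (pow_pos hrho 4).le) (by linarith : (0:ℝ) ≤ α - 1)]
  have hT5' : 0 ≤ Delta*(rho*(1-E))^4 := by positivity
  have hNup : N * r ≤ Kr * α := by
    have e1 : N * r = rho^5*((1-E)^2*(α*r*E)^2) + rho^4*Delta*(α*r*E)^2
        - 2*rho^4*Delta*((r*α)*(α*r*E))
        + r*(Delta*α*rho^2*(1+r)*(rho*(1-E))^2) - r*(Delta*(rho*(1-E))^4) := by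
      rw [hN]; ring
    have hrT4 : r*(Delta*α*rho^2*(1+r)*(rho*(1-E))^2) ≤ 1*(2*Delta*α*rho^4) :=
      mul_le_mul hr1.le hT4 hT4' zero_le_one
    have hrT5 : (0:ℝ) ≤ r*(Delta*(rho*(1-E))^4) := mul_nonneg hr.le hT5'
    have hc1 : 4*rho^5*lam^2*1 ≤ 4*rho^5*lam^2*α :=
      mul_le_mul_of_nonneg_left (by linarith) (by positivity)
    have hc2 : 4*rho^4*Delta*lam^2*1 ≤ 4*rho^4*Delta*lam^2*α :=
      mul_le_mul_of_nonneg_left (by linarith) (by positivity)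
    have hc3 : (0:ℝ) ≤ 4*rho^4*Delta*lam*α := by positivity
    have hc4 : (0:ℝ) ≤ Delta*rho^4*α := by positivity
    rw [e1, hKr]
    linarith [hT1, hT2, hT3', hrT4, hrT5, hc1, hc2, hc3, hc4]
  have hNlo : -(Kr * α) ≤ N * r := by
    have e1 : N * r = rho^5*((1-E)^2*(α*r*E)^2) + rho^4*Delta*(α*r*E)^2
        - 2*rho^4*Delta*((r*α)*(α*r*E))
        + r*(Delta*α*rho^2*(1+r)*(rho*(1-E))^2) - r*(Delta*(rho*(1-E))^4) := by
      rw [hN]; ring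
    have y1 : (0:ℝ) ≤ rho^5*((1-E)^2*(α*r*E)^2) :=
      mul_nonneg (by positivity) (mul_nonneg (sq_nonneg _) (sq_nonneg _))
    have y2 : (0:ℝ) ≤ rho^4*Delta*(α*r*E)^2 := by positivity
    have hrT4' : (0:ℝ) ≤ r*(Delta*α*rho^2*(1+r)*(rho*(1-E))^2) := mul_nonneg hr.le hT4'
    have hrT5' : r*(Delta*(rho*(1-E))^4) ≤ 1*(Delta*rho^4*α) :=
      mul_le_mul hr1.le hT5 hT5' zero_le_one
    have hc1 : (0:ℝ) ≤ 4*rho^5*lam^2*α := by positivity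
    have hc2 : (0:ℝ) ≤ 4*rho^4*Delta*lam^2*α := by positivity
    have hc4 : (0:ℝ) ≤ 2*Delta*rho^4*α := by positivity
    rw [e1, hKr]
    linarith [y1, y2, hT3, hrT4', hrT5', hc1, hc2, hc4]
  have habs : |N| ≤ (Kr*α)/r := by
    rw [abs_le]
    constructor
    · rw [← neg_div, div_le_iff₀ hr]; linarith
    · rw [le_div_iff₀ hr]; exact hNup
  have hDenpos : 0 < r*α*(D1*D2) := by positivity
  have hDen : r^2*rho^4/4*α^3 ≤ r*α*(D1*D2) := by
    have h1 : (α*rho^2*r/2) * (α*rho^2/2) ≤ D1 * D2 :=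
      mul_le_mul hD1 hD2 (by positivity) hD1pos.le
    nlinarith [mul_le_mul_of_nonneg_left h1 hrα.le]
  calc |N| / (r*α*(D1*D2)) ≤ ((Kr*α)/r) / (r^2*rho^4/4*α^3) := by
        apply div_le_div₀ (by positivity) habs (by positivity) hDen
    _ = 4*Kr/(r^3*rho^4) / α^2 := by
        rw [hKr]; field_simp

set_option maxHeartbeats 2000000 in
/-- The rescaled subsampling variance estimate for ridge regression at rate `r`
satisfies `(q_r(α) − q₁₂,r(α))/(1 − r) = Δ/(rα) + O(1/α²)` as `α → ∞`. -/
theorem stmt11 (lam rho Delta r : ℝ)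
    (hlam : 0 < lam) (hrho : 0 < rho) (hDelta : 0 < Delta) (hr : 0 < r) (hr1 : r < 1)
    (v m q q12 : ℝ → ℝ)
    (hv : ∀ α : ℝ, 0 < α →
      v α = (1 - lam - α * r + Real.sqrt ((α * r + lam - 1) ^ 2 + 4 * lam)) / (2 * lam))
    (hm : ∀ α : ℝ, 0 < α → m α = rho * (1 - lam * v α))
    (hq : ∀ α : ℝ, 0 < α →
      q α = m α ^ 2 * (α * rho * r + rho + Delta - 2 * m α) / (α * rho ^ 2 * r - m α ^ 2))
    (hq12 : ∀ α : ℝ, 0 < α →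
      q12 α = m α ^ 2 * (α * rho + rho + Delta - 2 * m α) / (α * rho ^ 2 - m α ^ 2)) :
    ∃ C > 0, ∃ α₀ : ℝ, ∀ α ≥ α₀,
      |(q α - q12 α) / (1 - r) - Delta / (r * α)| ≤ C / α ^ 2 := by
  refine ⟨4*(4*rho^5*lam^2 + 4*rho^4*Delta*lam^2 + 4*rho^4*Delta*lam + 3*Delta*rho^4)
      /(r^3*rho^4), by positivity, (4+4*lam)/r + 2, ?_⟩
  intro α hα
  have hα2 : 2 ≤ α := by
    have h0 : 0 < (4+4*lam)/r := by positivity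
    linarith
  have hα0 : 0 < α := by linarith
  have hαr : 4 + 4*lam ≤ α * r := by
    have h : 4 + 4*lam ≤ (α - 2) * r := (div_le_iff₀ hr).1 (by linarith)
    nlinarith
  have hs0 : 0 ≤ Real.sqrt ((α*r+lam-1)^2+4*lam) := Real.sqrt_nonneg _
  have hs2 : (Real.sqrt ((α*r+lam-1)^2+4*lam))^2 = (α*r+lam-1)^2+4*lam :=
    Real.sq_sqrt (by positivity)
  set s := Real.sqrt ((α*r+lam-1)^2+4*lam) with hsdef
  have hbpos : 2 ≤ α*r + lam - 1 := by linarith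
  obtain ⟨hE0', hEb'⟩ := auxE lam (α*r+lam-1) s hlam hbpos hs0 hs2
  set E := lam * v α with hEdef
  have hEeq : E = (s - (α*r+lam-1))/2 := by
    rw [hEdef, hv α hα0]
    have h : (α * r + lam - 1) ^ 2 + 4 * lam = (α*r+lam-1)^2+4*lam := by ring
    rw [h, ← hsdef]
    field_simp
    ring
  clear_value s
  have hE0 : 0 < E := by rw [hEeq]; exact hE0'
  have hEb : E*(α*r+lam-1) ≤ lam := by rw [hEeq]; exact hEb'
  clear_value E
  obtain ⟨hArE, hE2⟩ := auxE2 lam r α E (α*r+lam-1) hlam hE0 hEb (by linarith) (by linarith)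
  have hmα : m α = rho*(1-E) := by rw [hm α hα0, ← hEdef]
  have h1e : (1-E)^2 ≤ 1 := by nlinarith
  have hm2le : (rho*(1-E))^2 ≤ rho^2 := by
    nlinarith [mul_le_mul_of_nonneg_left h1e (sq_nonneg rho)]
  have hD1pos : 0 < α*rho^2*r - (rho*(1-E))^2 := by
    nlinarith [mul_nonneg (by linarith : (0:ℝ) ≤ α*r - 4) (sq_nonneg rho)]
  have hD2pos : 0 < α*rho^2 - (rho*(1-E))^2 := by
    nlinarith [mul_nonneg (by linarith : (0:ℝ) ≤ α - 2) (sq_nonneg rho)]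
  have key : (q α - q12 α)/(1-r) - Delta/(r*α) =
      (r*α^2*rho^3*(rho*(1-E))^2*E^2 + r*α^2*rho^4*Delta*(E^2-2*E)
        + Delta*α*rho^2*(1+r)*(rho*(1-E))^2 - Delta*(rho*(1-E))^4)
      / (r*α*((α*rho^2*r - (rho*(1-E))^2)*(α*rho^2 - (rho*(1-E))^2))) := by
    have h1r : (1:ℝ) - r ≠ 0 := by linarith
    rw [hq α hα0, hq12 α hα0, hmα]
    rw [div_sub_div _ _ hD1pos.ne' hD2pos.ne', div_div,
      div_sub_div _ _ (mul_ne_zero (mul_ne_zero hD1pos.ne' hD2pos.ne') h1r) (mul_ne_zero hr.ne' hα0.ne'),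
      div_eq_div_iff (mul_ne_zero (mul_ne_zero (mul_ne_zero hD1pos.ne' hD2pos.ne') h1r) (mul_ne_zero hr.ne' hα0.ne'))
        (mul_ne_zero (mul_ne_zero hr.ne' hα0.ne') (mul_ne_zero hD1pos.ne' hD2pos.ne'))]
    ring
  have hden : 0 < r*α*((α*rho^2*r - (rho*(1-E))^2)*(α*rho^2 - (rho*(1-E))^2)) :=
    mul_pos (mul_pos hr hα0) (mul_pos hD1pos hD2pos)
  rw [key, abs_div, abs_of_pos hden]
  exact auxBound lam rho Delta r α E hlam hrho hDelta hr hr1 hα2 hαr hE0 hArE hE2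
end

section
/- Let λ, ρ, Δ > 0 and 0 < r < 1. For α > 0 define the subsampling variance Var_ss(α) := (q_r(α) − q₁₂,r(α))/(1 − r) with v_r(α) := (1 − λ − αr + √((αr + λ − 1)² + 4λ))/(2λ), m_r(α) := ρ·(1 − λ·v_r(α)), q_r(α) := m_r(α)²·(αρr + ρ + Δ − 2m_r(α))/(αρ²r − m_r(α)²), q₁₂,r(α) := m_r(α)²·(αρ + ρ + Δ − 2m_r(α))/(αρ² − m_r(α)²); and the true variance Var(α) := q(α) − q₁₂(α) with v(α) := (1 − λ − α + √((α + λ − 1)² + 4λ))/(2λ), m(α) := ρ·(1 − λ·v(α)), q(α) := m(α)²·(αρ + ρ + Δ − 2m(α))/(αρ² − m(α)²), q₁₂(α) := m(α)²/ρ. Then Var_ss(α) − Var(α) − Δ(1−r)/(rα) = O(1/α²) as α → ∞. -/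
set_option maxHeartbeats 1000000

private lemma wfacts (lam s : ℝ) (hlam : 0 < lam) (hs : 0 < s) :
    0 ≤ (Real.sqrt (s ^ 2 + 4 * lam) - s) / 2 ∧
      ((Real.sqrt (s ^ 2 + 4 * lam) - s) / 2) * s ≤ lam := by
  have harg : (0:ℝ) ≤ s ^ 2 + 4 * lam := by positivity
  have hS2 : (Real.sqrt (s ^ 2 + 4 * lam)) ^ 2 = s ^ 2 + 4 * lam := Real.sq_sqrt harg
  have hSs : s ≤ Real.sqrt (s ^ 2 + 4 * lam) := by
    have := Real.sqrt_le_sqrt (show s ^ 2 ≤ s ^ 2 + 4 * lam by linarith)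
    rwa [Real.sqrt_sq hs.le] at this
  refine ⟨by linarith, ?_⟩
  nlinarith [mul_nonneg (sub_nonneg.2 hSs) hs.le]

private lemma mini_b1 (w : ℝ) (h0 : 0 ≤ w) (h2 : w ≤ 1/2) : (1 - w) ^ 2 ≤ 1 := by nlinarith

private lemma mini_aw2 (K a w : ℝ) (h0 : 0 ≤ w) (ha : 2 ≤ a) (h : w * a ≤ K) :
    a * w ^ 2 ≤ K ^ 2 ∧ a ^ 2 * w ^ 2 ≤ K ^ 2 ∧ a ^ 2 * w ≤ K * a := by
  have ha0 : (0:ℝ) ≤ a := by linarith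
  have haw : (0:ℝ) ≤ w * a := mul_nonneg h0 ha0
  have h2' : a ^ 2 * w ^ 2 ≤ K ^ 2 := by nlinarith
  refine ⟨by nlinarith, h2', by nlinarith⟩

private lemma mini_Nub (rho Delta K a w b : ℝ) (hrho : 0 < rho) (hD : 0 < Delta)
    (hK : 0 < K) (hb0 : 0 ≤ b) (hb1 : b ≤ 1) (hw0 : 0 ≤ w) (ha0 : 0 ≤ a)
    (haw2 : a * w ^ 2 ≤ K ^ 2) :
    a * Delta * (w ^ 2 - 2 * w) + a * rho * w ^ 2 * b + Delta * b
      ≤ Delta * (K ^ 2 + 2 * K + 1) + rho * K ^ 2 := by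
  have h1 : a * rho * w ^ 2 * b ≤ rho * K ^ 2 := by
    nlinarith [mul_nonneg (mul_nonneg (mul_nonneg ha0 hrho.le) (sq_nonneg w)) (sub_nonneg.2 hb1)]
  have h2 : a * Delta * (w ^ 2 - 2 * w) ≤ Delta * K ^ 2 := by
    nlinarith [mul_nonneg (mul_nonneg ha0 hD.le) hw0]
  nlinarith [mul_nonneg hD.le hK.le]

private lemma mini_Nlb (rho Delta K a w b : ℝ) (hrho : 0 < rho) (hD : 0 < Delta)
    (hK : 0 < K) (hb0 : 0 ≤ b) (hw0 : 0 ≤ w) (ha0 : 0 ≤ a) (haw1 : w * a ≤ K) :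
    -(Delta * (K ^ 2 + 2 * K + 1) + rho * K ^ 2)
      ≤ a * Delta * (w ^ 2 - 2 * w) + a * rho * w ^ 2 * b + Delta * b := by
  have h1 : (0:ℝ) ≤ a * rho * w ^ 2 * b := by positivity
  have h2 : -(2 * Delta * K) ≤ a * Delta * (w ^ 2 - 2 * w) := by
    nlinarith [mul_nonneg (mul_nonneg ha0 hD.le) (sq_nonneg w),
      mul_le_mul_of_nonneg_left haw1 hD.le]
  nlinarith [mul_nonneg hD.le (sq_nonneg K), mul_nonneg hrho.le (sq_nonneg K),
    mul_nonneg hD.le hb0]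

private lemma bound_var (rho Delta K α w : ℝ) (hrho : 0 < rho) (hD : 0 < Delta)
    (hK : 0 < K) (hw0 : 0 ≤ w) (hwa : w * α ≤ K) (hw2 : w ≤ 1/2) (ha : 2 ≤ α) :
    |(1 - w) ^ 2 * (Delta + rho * w ^ 2) / (α - (1 - w) ^ 2) - Delta / α|
      ≤ 2 * (Delta * (K ^ 2 + 2 * K + 1) + rho * K ^ 2) / α ^ 2 := by
  have ha0 : (0:ℝ) < α := by linarith
  have hb1 : (1 - w) ^ 2 ≤ 1 := mini_b1 w hw0 hw2
  have hb0 : (0:ℝ) ≤ (1 - w) ^ 2 := sq_nonneg _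
  have hd : α / 2 ≤ α - (1 - w) ^ 2 := by linarith
  have hd0 : (0:ℝ) < α - (1 - w) ^ 2 := by linarith
  have hden0 : (0:ℝ) < α * (α - (1 - w) ^ 2) := by positivity
  have hden : α ^ 2 / 2 ≤ α * (α - (1 - w) ^ 2) := by
    have := mul_le_mul_of_nonneg_left hd ha0.le
    nlinarith
  set N : ℝ := α * Delta * (w ^ 2 - 2 * w) + α * rho * w ^ 2 * (1 - w) ^ 2
      + Delta * (1 - w) ^ 2 with hNdef
  have heq : (1 - w) ^ 2 * (Delta + rho * w ^ 2) / (α - (1 - w) ^ 2) - Delta / α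
      = N / (α * (α - (1 - w) ^ 2)) := by
    rw [hNdef]
    field_simp
    ring
  obtain ⟨haw2, -, -⟩ := mini_aw2 K α w hw0 ha hwa
  have hNub : N ≤ Delta * (K ^ 2 + 2 * K + 1) + rho * K ^ 2 :=
    mini_Nub rho Delta K α w ((1 - w) ^ 2) hrho hD hK hb0 hb1 hw0 ha0.le haw2
  have hNlb : -(Delta * (K ^ 2 + 2 * K + 1) + rho * K ^ 2) ≤ N :=
    mini_Nlb rho Delta K α w ((1 - w) ^ 2) hrho hD hK hb0 hw0 ha0.le hwa
  rw [heq, abs_div, abs_of_pos hden0]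
  calc |N| / (α * (α - (1 - w) ^ 2))
      ≤ (Delta * (K ^ 2 + 2 * K + 1) + rho * K ^ 2) / (α ^ 2 / 2) :=
        div_le_div₀ (by positivity) (abs_le.2 ⟨hNlb, hNub⟩) (by positivity) hden
    _ = 2 * (Delta * (K ^ 2 + 2 * K + 1) + rho * K ^ 2) / α ^ 2 := by
        rw [div_div_eq_mul_div, div_eq_div_iff (by positivity) (by positivity)]
        ring

private lemma mini_Pub (rho r K a w b : ℝ) (hrho : 0 < rho) (hr0 : 0 < r)
    (hb0 : 0 ≤ b) (hb1 : b ≤ 1) (haw2 : a ^ 2 * w ^ 2 ≤ K ^ 2) :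
    r * a ^ 2 * b * rho * w ^ 2 ≤ r * rho * K ^ 2 := by
  nlinarith [mul_le_mul_of_nonneg_left haw2 (mul_nonneg hr0.le hrho.le),
    mul_nonneg (mul_nonneg (mul_nonneg hr0.le hrho.le)
      (mul_nonneg (sq_nonneg a) (sq_nonneg w))) (sub_nonneg.2 hb1)]

private lemma mini_T2u (r K a w : ℝ) (hr0 : 0 < r) (hw0 : 0 ≤ w) (ha0 : 0 ≤ a)
    (haw2 : a ^ 2 * w ^ 2 ≤ K ^ 2) : r * a ^ 2 * (w ^ 2 - 2 * w) ≤ r * K ^ 2 := by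
  nlinarith [mul_le_mul_of_nonneg_left haw2 hr0.le,
    mul_nonneg (mul_nonneg hr0.le (sq_nonneg a)) hw0]

private lemma mini_T2l (r K a w : ℝ) (hr0 : 0 < r) (hw0 : 0 ≤ w) (ha0 : 0 ≤ a)
    (haw1 : a ^ 2 * w ≤ K * a) : -(2 * r * K * a) ≤ r * a ^ 2 * (w ^ 2 - 2 * w) := by
  nlinarith [mul_le_mul_of_nonneg_left haw1 hr0.le,
    mul_nonneg (mul_nonneg hr0.le (sq_nonneg a)) (sq_nonneg w)]

private lemma mini_arb (r a b : ℝ) (hr0 : 0 < r) (hr1 : r ≤ 1) (hb0 : 0 ≤ b) (hb1 : b ≤ 1)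
    (ha0 : 0 ≤ a) : a * r * b ≤ a := by
  have h1 : a * r * b ≤ a * r := mul_le_of_le_one_right (mul_nonneg ha0 hr0.le) hb1
  have h2 : a * r ≤ a := mul_le_of_le_one_right ha0 hr1
  linarith

private lemma bound_varss (rho Delta K r α w : ℝ) (hrho : 0 < rho) (hD : 0 < Delta)
    (hK : 0 < K) (hr0 : 0 < r) (hr1 : r ≤ 1)
    (hw0 : 0 ≤ w) (hwa : w * α ≤ K) (hw2 : w ≤ 1/2) (ha : 2 ≤ α) (har : 2 ≤ α * r) :
    |α * (1 - w) ^ 2 * (Delta + rho * w ^ 2) / ((α * r - (1 - w) ^ 2) * (α - (1 - w) ^ 2))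
        - Delta / (r * α)|
      ≤ 4 * (Delta * (r * K ^ 2 + 2 * r * K + 3) + r * rho * K ^ 2) / r ^ 2 / α ^ 2 := by
  have ha0 : (0:ℝ) < α := by linarith
  have hb1 : (1 - w) ^ 2 ≤ 1 := mini_b1 w hw0 hw2
  have hb0 : (0:ℝ) ≤ (1 - w) ^ 2 := sq_nonneg _
  have hd : α / 2 ≤ α - (1 - w) ^ 2 := by linarith
  have hd0 : (0:ℝ) < α - (1 - w) ^ 2 := by linarith
  have hdr : α * r / 2 ≤ α * r - (1 - w) ^ 2 := by linarith
  have hdr0 : (0:ℝ) < α * r - (1 - w) ^ 2 := by linarith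
  have hden0 : (0:ℝ) < r * α * ((α * r - (1 - w) ^ 2) * (α - (1 - w) ^ 2)) := by positivity
  have hden : r ^ 2 * α ^ 3 / 4 ≤ r * α * ((α * r - (1 - w) ^ 2) * (α - (1 - w) ^ 2)) := by
    have h1 : (α * r / 2) * (α / 2) ≤ (α * r - (1 - w) ^ 2) * (α - (1 - w) ^ 2) :=
      mul_le_mul hdr hd (by linarith) hdr0.le
    have h2 := mul_le_mul_of_nonneg_left h1 (mul_nonneg hr0.le ha0.le)
    nlinarith
  set T : ℝ := r * α ^ 2 * (w ^ 2 - 2 * w) + α * r * (1 - w) ^ 2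
      + α * (1 - w) ^ 2 - (1 - w) ^ 4 with hTdef
  set P : ℝ := r * α ^ 2 * (1 - w) ^ 2 * rho * w ^ 2 with hPdef
  set M : ℝ := Delta * T + P with hMdef
  have heq : α * (1 - w) ^ 2 * (Delta + rho * w ^ 2) / ((α * r - (1 - w) ^ 2) * (α - (1 - w) ^ 2))
      - Delta / (r * α)
      = M / (r * α * ((α * r - (1 - w) ^ 2) * (α - (1 - w) ^ 2))) := by
    rw [hMdef, hTdef, hPdef]
    field_simp
    ring
  obtain ⟨-, haw2, haw1⟩ := mini_aw2 K α w hw0 ha hwa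
  set CM : ℝ := Delta * (r * K ^ 2 + 2 * r * K + 3) + r * rho * K ^ 2 with hCMdef
  have hP0 : 0 ≤ P := by rw [hPdef]; positivity
  have hPub : P ≤ r * rho * K ^ 2 := by
    rw [hPdef]
    have := mini_Pub rho r K α w ((1 - w) ^ 2) hrho hr0 hb0 hb1 haw2
    linarith
  have h2u := mini_T2u r K α w hr0 hw0 ha0.le haw2
  have h2l := mini_T2l r K α w hr0 hw0 ha0.le haw1
  have h3 : α * r * (1 - w) ^ 2 ≤ α := mini_arb r α ((1 - w) ^ 2) hr0 hr1 hb0 hb1 ha0.le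
  have h4 : α * (1 - w) ^ 2 ≤ α := by nlinarith
  have h3l : (0:ℝ) ≤ α * r * (1 - w) ^ 2 := by positivity
  have h4l : (0:ℝ) ≤ α * (1 - w) ^ 2 := by positivity
  have h5u : (1 - w) ^ 4 ≤ 1 := by nlinarith
  have h5l : (0:ℝ) ≤ (1 - w) ^ 4 := by positivity
  have hTub : T ≤ r * K ^ 2 + 2 * α := by rw [hTdef]; linarith
  have hTlb : -(2 * r * K * α) - 1 ≤ T := by rw [hTdef]; linarith
  have hMub : M ≤ CM * α := by
    have hDT : Delta * T ≤ Delta * (r * K ^ 2 + 2 * α) := mul_le_mul_of_nonneg_left hTub hD.le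
    have e1 : (0:ℝ) ≤ Delta * (r * K ^ 2) * (α - 1) := by
      have : (0:ℝ) ≤ α - 1 := by linarith
      positivity
    have e2 : (0:ℝ) ≤ Delta * (2 * r * K) * α := by positivity
    have e3 : (0:ℝ) ≤ Delta * α := by positivity
    have e4 : (0:ℝ) ≤ r * rho * K ^ 2 * (α - 1) := by
      have : (0:ℝ) ≤ α - 1 := by linarith
      positivity
    rw [hMdef, hCMdef]; linarith
  have hMlb : -(CM * α) ≤ M := by
    have hDT : Delta * (-(2 * r * K * α) - 1) ≤ Delta * T := mul_le_mul_of_nonneg_left hTlb hD.le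
    have e1 : (0:ℝ) ≤ Delta * (r * K ^ 2) * α := by positivity
    have e2 : (0:ℝ) ≤ Delta * (3 * α - 1) := by
      have : (0:ℝ) ≤ 3 * α - 1 := by linarith
      positivity
    have e3 : (0:ℝ) ≤ r * rho * K ^ 2 * α := by positivity
    rw [hMdef, hCMdef]; linarith
  rw [heq, abs_div, abs_of_pos hden0]
  calc |M| / (r * α * ((α * r - (1 - w) ^ 2) * (α - (1 - w) ^ 2)))
      ≤ CM * α / (r ^ 2 * α ^ 3 / 4) :=
        div_le_div₀ (by positivity) (abs_le.2 ⟨hMlb, hMub⟩) (by positivity) hden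
    _ = 4 * CM / r ^ 2 / α ^ 2 := by
        rw [div_div, div_eq_div_iff (by positivity) (by positivity)]
        ring

private lemma mini_wa (lam s a w : ℝ) (hw0 : 0 ≤ w) (hws : w * s ≤ lam)
    (hhalf : a / 2 ≤ s) : w * a ≤ 2 * lam := by
  nlinarith [mul_le_mul_of_nonneg_left hhalf hw0]

private lemma mini_w2 (a w c : ℝ) (ha : 0 < a) (h1 : w * a ≤ c) (h2 : 2 * c ≤ a) :
    w ≤ 1 / 2 := by nlinarith

/-- Leading-order error of subsampling as a variance estimator for ridge regression:
`Var_ss(α) − Var(α) = Δ(1−r)/(rα) + O(1/α²)` as `α → ∞`. -/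
theorem stmt12 (lam rho Delta r : ℝ)
    (hlam : 0 < lam) (hrho : 0 < rho) (hDelta : 0 < Delta) (hr : 0 < r) (hr1 : r < 1)
    -- subsampling overlaps and rescaled subsampling variance
    (vr mr qr q12r Varss : ℝ → ℝ)
    (hvr : ∀ α : ℝ, 0 < α →
      vr α = (1 - lam - α * r + Real.sqrt ((α * r + lam - 1) ^ 2 + 4 * lam)) / (2 * lam))
    (hmr : ∀ α : ℝ, 0 < α → mr α = rho * (1 - lam * vr α))
    (hqr : ∀ α : ℝ, 0 < α →
      qr α = mr α ^ 2 * (α * rho * r + rho + Delta - 2 * mr α) / (α * rho ^ 2 * r - mr α ^ 2))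
    (hq12r : ∀ α : ℝ, 0 < α →
      q12r α = mr α ^ 2 * (α * rho + rho + Delta - 2 * mr α) / (α * rho ^ 2 - mr α ^ 2))
    (hVarss : ∀ α : ℝ, 0 < α → Varss α = (qr α - q12r α) / (1 - r))
    -- full-resampling overlaps and true variance
    (v m q q12 Var : ℝ → ℝ)
    (hv : ∀ α : ℝ, 0 < α →
      v α = (1 - lam - α + Real.sqrt ((α + lam - 1) ^ 2 + 4 * lam)) / (2 * lam))
    (hm : ∀ α : ℝ, 0 < α → m α = rho * (1 - lam * v α))
    (hq : ∀ α : ℝ, 0 < α →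
      q α = m α ^ 2 * (α * rho + rho + Delta - 2 * m α) / (α * rho ^ 2 - m α ^ 2))
    (hq12 : ∀ α : ℝ, 0 < α → q12 α = m α ^ 2 / rho)
    (hVar : ∀ α : ℝ, 0 < α → Var α = q α - q12 α) :
    ∃ C > 0, ∃ α₀ : ℝ, ∀ α ≥ α₀,
      |Varss α - Var α - Delta * (1 - r) / (r * α)| ≤ C / α ^ 2 := by
  set K : ℝ := 2 * lam with hKdef
  set Kr : ℝ := 2 * lam / r with hKrdef
  set CN : ℝ := Delta * (K ^ 2 + 2 * K + 1) + rho * K ^ 2 with hCNdef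
  set CMr : ℝ := Delta * (r * Kr ^ 2 + 2 * r * Kr + 3) + r * rho * Kr ^ 2 with hCMrdef
  have hK0 : 0 < K := by rw [hKdef]; positivity
  have hKr0 : 0 < Kr := by rw [hKrdef]; positivity
  have hC0 : 0 < 2 * CN + 4 * CMr / r ^ 2 := by
    rw [hCNdef, hCMrdef]; positivity
  refine ⟨2 * CN + 4 * CMr / r ^ 2, hC0, 2 + 2 / r + 4 * lam + 4 * lam / r, ?_⟩
  intro α hα
  have hrpos : (0:ℝ) < 2 / r := by positivity
  have hlr : (0:ℝ) < 4 * lam / r := by positivity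
  have ha2 : (2:ℝ) ≤ α := by linarith
  have hα0 : (0:ℝ) < α := by linarith
  have har2 : (2:ℝ) ≤ α * r := (div_le_iff₀ hr).1 (by linarith : 2 / r ≤ α)
  have h4l : 4 * lam ≤ α := by linarith
  have h4lr : 4 * lam ≤ α * r := (div_le_iff₀ hr).1 (by linarith : 4 * lam / r ≤ α)
  -- full-resampling w
  have hs0 : (0:ℝ) < α + lam - 1 := by linarith
  obtain ⟨hw0, hws⟩ := wfacts lam (α + lam - 1) hlam hs0
  set w : ℝ := (Real.sqrt ((α + lam - 1) ^ 2 + 4 * lam) - (α + lam - 1)) / 2 with hwdef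
  have hwa : w * α ≤ K := by
    rw [hKdef]
    exact mini_wa lam (α + lam - 1) α w hw0 hws (by linarith)
  have hw2 : w ≤ 1 / 2 := mini_w2 α w K hα0 hwa (by rw [hKdef] at *; linarith)
  -- subsampling w
  have hsr0 : (0:ℝ) < α * r + lam - 1 := by linarith
  obtain ⟨hwr0, hwrs⟩ := wfacts lam (α * r + lam - 1) hlam hsr0
  set wr : ℝ := (Real.sqrt ((α * r + lam - 1) ^ 2 + 4 * lam) - (α * r + lam - 1)) / 2 with hwrdef
  have hwra : wr * α ≤ Kr := by
    have h1 : wr * (α * r) ≤ 2 * lam :=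
      mini_wa lam (α * r + lam - 1) (α * r) wr hwr0 hwrs (by linarith)
    rw [hKrdef, le_div_iff₀ hr]
    linarith [h1]
  have hwr2 : wr ≤ 1 / 2 := by
    refine mini_w2 α wr Kr hα0 hwra ?_
    rw [hKrdef]
    have : 2 * (2 * lam / r) * r = 4 * lam := by field_simp; ring
    nlinarith [this]
  -- closed form for Var
  have hlv : lam * v α = w := by
    rw [hv α hα0, hwdef]
    field_simp
    ring
  have hmα : m α = rho * (1 - w) := by rw [hm α hα0, hlv]
  have hb1 : (1 - w) ^ 2 ≤ 1 := mini_b1 w hw0 hw2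
  have hdd : (0:ℝ) < α - (1 - w) ^ 2 := by linarith
  have hVarEq : Var α = (1 - w) ^ 2 * (Delta + rho * w ^ 2) / (α - (1 - w) ^ 2) := by
    rw [hVar α hα0, hq α hα0, hq12 α hα0, hmα,
      show α * rho ^ 2 - (rho * (1 - w)) ^ 2 = rho ^ 2 * (α - (1 - w) ^ 2) from by ring]
    field_simp
    ring
  -- closed form for Varss
  have hlvr : lam * vr α = wr := by
    rw [hvr α hα0, hwrdef]
    field_simp
    ring
  have hmrα : mr α = rho * (1 - wr) := by rw [hmr α hα0, hlvr]
  have hbr1 : (1 - wr) ^ 2 ≤ 1 := mini_b1 wr hwr0 hwr2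
  have hddr : (0:ℝ) < α * r - (1 - wr) ^ 2 := by linarith
  have hddr2 : (0:ℝ) < α - (1 - wr) ^ 2 := by linarith
  have h1r : (0:ℝ) < 1 - r := by linarith
  have hVarssEq : Varss α = α * (1 - wr) ^ 2 * (Delta + rho * wr ^ 2)
      / ((α * r - (1 - wr) ^ 2) * (α - (1 - wr) ^ 2)) := by
    rw [hVarss α hα0, hqr α hα0, hq12r α hα0, hmrα,
      show α * rho ^ 2 * r - (rho * (1 - wr)) ^ 2 = rho ^ 2 * (α * r - (1 - wr) ^ 2) from by ring,
      show α * rho ^ 2 - (rho * (1 - wr)) ^ 2 = rho ^ 2 * (α - (1 - wr) ^ 2) from by ring]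
    field_simp
    ring
  -- apply the two bounds
  have B1 := bound_var rho Delta K α w hrho hDelta hK0 hw0 hwa hw2 ha2
  have B2 := bound_varss rho Delta Kr r α wr hrho hDelta hKr0 hr hr1.le hwr0 hwra hwr2 ha2 har2
  rw [← hVarEq] at B1
  rw [← hVarssEq] at B2
  have hsplit : Varss α - Var α - Delta * (1 - r) / (r * α)
      = (Varss α - Delta / (r * α)) - (Var α - Delta / α) := by
    have hx : Delta * (1 - r) / (r * α) = Delta / (r * α) - Delta / α := by
      field_simp
    rw [hx]; ring
  calc |Varss α - Var α - Delta * (1 - r) / (r * α)|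
      ≤ |Varss α - Delta / (r * α)| + |Var α - Delta / α| := by
        rw [hsplit]; exact abs_sub _ _
    _ ≤ 4 * CMr / r ^ 2 / α ^ 2 + 2 * CN / α ^ 2 := add_le_add B2 B1
    _ = (2 * CN + 4 * CMr / r ^ 2) / α ^ 2 := by ring
end

section
/- Let λ, ρ, Δ > 0. For α > 0 and 0 < r < 1 define v_r(α) := (1 − λ − αr + √((αr + λ − 1)² + 4λ))/(2λ), m_r(α) := ρ·(1 − λ·v_r(α)), q_r(α) := m_r(α)²·(αρr + ρ + Δ − 2m_r(α))/(αρ²r − m_r(α)²), and q₁₂,r(α) := m_r(α)²·(αρ + ρ + Δ − 2m_r(α))/(αρ² − m_r(α)²). Then for every α > 0 the one-sided limit Var_jk(α) := lim_{r→1⁻} (q_r(α) − q₁₂,r(α))/(1 − r) exists, and Var_jk(α) − Δ/α = O(1/α²) as α → ∞. -/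
noncomputable def Mjk (lam rho a : ℝ) : ℝ :=
  rho * (1 + lam + a - Real.sqrt ((a + lam - 1) ^ 2 + 4 * lam)) / 2

lemma Mjk_sq (lam rho a : ℝ) (hlam : 0 < lam) :
    (Real.sqrt ((a + lam - 1) ^ 2 + 4 * lam)) ^ 2 = (a + lam - 1) ^ 2 + 4 * lam :=
  Real.sq_sqrt (by positivity)

lemma Mjk_pos (lam rho : ℝ) (hlam : 0 < lam) (hrho : 0 < rho) {a : ℝ} (ha : 0 < a) :
    0 < Mjk lam rho a := by
  unfold Mjk
  have hs0 : 0 ≤ Real.sqrt ((a + lam - 1) ^ 2 + 4 * lam) := Real.sqrt_nonneg _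
  have hs2 := Mjk_sq lam rho a hlam
  set s := Real.sqrt ((a + lam - 1) ^ 2 + 4 * lam)
  have h1 : s < 1 + lam + a := by nlinarith [sq_nonneg (s + (1 + lam + a))]
  nlinarith

lemma Mjk_lt (lam rho : ℝ) (hlam : 0 < lam) (hrho : 0 < rho) {a : ℝ} (ha : 0 < a) :
    Mjk lam rho a < rho := by
  unfold Mjk
  have hs0 : 0 ≤ Real.sqrt ((a + lam - 1) ^ 2 + 4 * lam) := Real.sqrt_nonneg _
  have hs2 := Mjk_sq lam rho a hlam
  set s := Real.sqrt ((a + lam - 1) ^ 2 + 4 * lam)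
  have h1 : a + lam - 1 < s := by nlinarith [sq_nonneg (s + (a + lam - 1))]
  nlinarith

lemma Mjk_sq_lt (lam rho : ℝ) (hlam : 0 < lam) (hrho : 0 < rho) {a : ℝ} (ha : 0 < a) :
    (Mjk lam rho a) ^ 2 < a * rho ^ 2 := by
  have hMp := Mjk_pos lam rho hlam hrho ha
  have ht2 : (Real.sqrt a) ^ 2 = a := Real.sq_sqrt ha.le
  have ht0 : 0 < Real.sqrt a := Real.sqrt_pos.2 ha
  set t := Real.sqrt a
  have hkey2 : ((t - 1) ^ 2 + lam) ^ 2 < (a + lam - 1) ^ 2 + 4 * lam := by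
    nlinarith [sq_nonneg (t - 1), mul_pos ht0 (show 0 < (t-1)^2 + lam by positivity)]
  have hkey : (t - 1) ^ 2 + lam < Real.sqrt ((a + lam - 1) ^ 2 + 4 * lam) :=
    (Real.lt_sqrt (by positivity)).2 hkey2
  have hMa : Mjk lam rho a < rho * t := by
    unfold Mjk; nlinarith
  nlinarith

lemma Mjk_cont (lam rho : ℝ) : Continuous (Mjk lam rho) := by
  unfold Mjk
  fun_prop

lemma Mjk_err (lam rho : ℝ) (hlam : 0 < lam) (hrho : 0 < rho) {a : ℝ} (ha : 2 ≤ a) :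
    (rho - Mjk lam rho a) * a ≤ 2 * rho * lam := by
  have ha0 : 0 < a := by linarith
  have hs0 : 0 ≤ Real.sqrt ((a + lam - 1) ^ 2 + 4 * lam) := Real.sqrt_nonneg _
  have hs2 := Mjk_sq lam rho a hlam
  set s := Real.sqrt ((a + lam - 1) ^ 2 + 4 * lam) with hsdef
  have hb : a + lam - 1 ≤ s := by nlinarith [sq_nonneg (s + (a + lam - 1))]
  have hhalf : a / 2 ≤ a + lam - 1 := by linarith
  have hprod : 0 ≤ (s - (a + lam - 1)) * (s + (a + lam - 1) - a) :=
    mul_nonneg (by linarith) (by linarith)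
  have h4 : a * (s - (a + lam - 1)) ≤ 4 * lam := by nlinarith
  have hM : rho - Mjk lam rho a = rho * (s - (a + lam - 1)) / 2 := by
    unfold Mjk; rw [← hsdef]; ring
  rw [hM]
  nlinarith

set_option maxHeartbeats 1000000 in
lemma ridge_heq2 (rho Delta α e : ℝ) (hα : α ≠ 0)
    (hD : α * rho ^ 2 - (rho - e) ^ 2 ≠ 0) :
    (rho - e) ^ 2 * (α * rho) * (((rho - e) - rho) ^ 2 + rho * Delta)
        / ((α * rho ^ 2 - (rho - e) ^ 2) ^ 2) - Delta / α
      = (rho * (rho - e) ^ 2 * (e * α) ^ 2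
          - Delta * rho ^ 2 * (e * α) * (2 * rho - e) * α
          + 2 * Delta * α * rho ^ 2 * (rho - e) ^ 2
          - Delta * (rho - e) ^ 4)
        / (α * (α * rho ^ 2 - (rho - e) ^ 2) ^ 2) := by
  rw [div_sub_div _ _ (pow_ne_zero 2 hD) hα,
    div_eq_div_iff (mul_ne_zero (pow_ne_zero 2 hD) hα) (mul_ne_zero hα (pow_ne_zero 2 hD))]
  ring

set_option maxHeartbeats 1000000 in
lemma ridge_heq1 (rho Delta α r μ : ℝ) (h1r : (1:ℝ) - r ≠ 0)
    (hD1 : α * rho ^ 2 * r - μ ^ 2 ≠ 0) (hD2 : α * rho ^ 2 - μ ^ 2 ≠ 0) :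
    μ ^ 2 * (α * rho) * ((μ - rho) ^ 2 + rho * Delta)
        / ((α * rho ^ 2 * r - μ ^ 2) * (α * rho ^ 2 - μ ^ 2))
      = (μ ^ 2 * (α * rho * r + rho + Delta - 2 * μ) / (α * rho ^ 2 * r - μ ^ 2)
          - μ ^ 2 * (α * rho + rho + Delta - 2 * μ) / (α * rho ^ 2 - μ ^ 2)) / (1 - r) := by
  field_simp
  ring

/-- The jackknife variance estimate for ridge regression: for every `α > 0` the
one-sided limit `Var_jk(α) = lim_{r→1⁻} (q_r(α) − q₁₂,r(α))/(1−r)` exists, and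
`Var_jk(α) = Δ/α + O(1/α²)` as `α → ∞`. -/
theorem stmt13 (lam rho Delta : ℝ) (hlam : 0 < lam) (hrho : 0 < rho) (hDelta : 0 < Delta)
    -- subsampling overlaps as functions of the rate `r` and the ratio `α`
    (v m q q12 : ℝ → ℝ → ℝ)
    (hv : ∀ r : ℝ, 0 < r → r < 1 → ∀ α : ℝ, 0 < α →
      v r α = (1 - lam - α * r + Real.sqrt ((α * r + lam - 1) ^ 2 + 4 * lam)) / (2 * lam))
    (hm : ∀ r : ℝ, 0 < r → r < 1 → ∀ α : ℝ, 0 < α → m r α = rho * (1 - lam * v r α))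
    (hq : ∀ r : ℝ, 0 < r → r < 1 → ∀ α : ℝ, 0 < α →
      q r α = m r α ^ 2 * (α * rho * r + rho + Delta - 2 * m r α)
        / (α * rho ^ 2 * r - m r α ^ 2))
    (hq12 : ∀ r : ℝ, 0 < r → r < 1 → ∀ α : ℝ, 0 < α →
      q12 r α = m r α ^ 2 * (α * rho + rho + Delta - 2 * m r α)
        / (α * rho ^ 2 - m r α ^ 2)) :
    ∃ Varjk : ℝ → ℝ,
      (∀ α : ℝ, 0 < α →
        Filter.Tendsto (fun r : ℝ => (q r α - q12 r α) / (1 - r))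
          (nhdsWithin 1 (Set.Iio 1)) (nhds (Varjk α))) ∧
      ∃ C > 0, ∃ α₀ : ℝ, ∀ α ≥ α₀, |Varjk α - Delta / α| ≤ C / α ^ 2 := by
  set M : ℝ → ℝ := Mjk lam rho with hMdef
  refine ⟨fun α => (M α) ^ 2 * (α * rho) * ((M α - rho) ^ 2 + rho * Delta)
      / ((α * rho ^ 2 - (M α) ^ 2) ^ 2), ?_, ?_⟩
  · -- the limit part
    intro α hα
    set Φ : ℝ → ℝ := fun r => (M (α * r)) ^ 2 * (α * rho) * ((M (α * r) - rho) ^ 2 + rho * Delta)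
      / ((α * rho ^ 2 * r - (M (α * r)) ^ 2) * (α * rho ^ 2 - (M (α * r)) ^ 2)) with hΦdef
    have hmem : Set.Ioo (0 : ℝ) 1 ∈ nhdsWithin (1 : ℝ) (Set.Iio 1) :=
      Ioo_mem_nhdsLT_of_mem (by constructor <;> norm_num)
    have heq : ∀ r ∈ Set.Ioo (0 : ℝ) 1, Φ r = (q r α - q12 r α) / (1 - r) := by
      rintro r ⟨hr0, hr1⟩
      have hmr : m r α = M (α * r) := by
        rw [hm r hr0 hr1 α hα, hv r hr0 hr1 α hα, hMdef]
        unfold Mjk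
        field_simp
        ring
      have hμ := Mjk_sq_lt lam rho hlam hrho (show 0 < α * r by positivity)
      rw [← hMdef] at hμ
      have hD1 : 0 < α * rho ^ 2 * r - (M (α * r)) ^ 2 := by nlinarith
      have hD2 : 0 < α * rho ^ 2 - (M (α * r)) ^ 2 := by nlinarith
      rw [hq r hr0 hr1 α hα, hq12 r hr0 hr1 α hα, hmr, hΦdef]
      have h1r : (1 : ℝ) - r ≠ 0 := by linarith [hr1]
      exact ridge_heq1 rho Delta α r (M (α * r)) h1r (ne_of_gt hD1) (ne_of_gt hD2)
    have hMc : Continuous M := Mjk_cont lam rho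
    have hc1 : Continuous fun r : ℝ => M (α * r) := hMc.comp (continuous_const.mul continuous_id)
    have hμ1 := Mjk_sq_lt lam rho hlam hrho hα
    rw [← hMdef] at hμ1
    have hden1 : (α * rho ^ 2 * 1 - (M (α * 1)) ^ 2) * (α * rho ^ 2 - (M (α * 1)) ^ 2) ≠ 0 := by
      rw [mul_one, mul_one]
      have hpos : 0 < α * rho ^ 2 - (M α) ^ 2 := by nlinarith
      exact ne_of_gt (mul_pos hpos hpos)
    have hnum_c : Continuous fun r : ℝ =>
        (M (α * r)) ^ 2 * (α * rho) * ((M (α * r) - rho) ^ 2 + rho * Delta) :=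
      ((hc1.pow 2).mul continuous_const).mul
        (((hc1.sub continuous_const).pow 2).add continuous_const)
    have hden_c : Continuous fun r : ℝ =>
        (α * rho ^ 2 * r - (M (α * r)) ^ 2) * (α * rho ^ 2 - (M (α * r)) ^ 2) :=
      ((continuous_const.mul continuous_id).sub (hc1.pow 2)).mul
        (continuous_const.sub (hc1.pow 2))
    have hcont : ContinuousAt Φ 1 := by
      rw [hΦdef]
      exact ContinuousAt.div hnum_c.continuousAt hden_c.continuousAt hden1
    have htend : Filter.Tendsto Φ (nhdsWithin 1 (Set.Iio 1)) (nhds (Φ 1)) :=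
      (hcont.tendsto).mono_left nhdsWithin_le_nhds
    have hΦ1 : Φ 1 = (M α) ^ 2 * (α * rho) * ((M α - rho) ^ 2 + rho * Delta)
        / ((α * rho ^ 2 - (M α) ^ 2) ^ 2) := by
      rw [hΦdef]
      simp only [mul_one]
      ring
    rw [hΦ1] at htend
    exact htend.congr' (Filter.eventually_of_mem hmem heq)
  · -- the asymptotic part
    have hK : (0:ℝ) < 2 * rho * lam := by positivity
    set K : ℝ := 2 * rho * lam with hKdef
    set C₁ : ℝ := rho ^ 3 * K ^ 2 + 3 * Delta * rho ^ 4 + 2 * Delta * K * rho ^ 3 with hC₁def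
    have hC₁ : 0 < C₁ := by rw [hC₁def, hKdef]; positivity
    refine ⟨4 * C₁ / rho ^ 4, by positivity, 2, ?_⟩
    intro α hα2
    have hα : 0 < α := by linarith
    have hμ0 : 0 < M α := Mjk_pos lam rho hlam hrho hα
    have hμρ : M α < rho := Mjk_lt lam rho hlam hrho hα
    obtain ⟨e, hμe⟩ : ∃ e, M α = rho - e := ⟨rho - M α, by ring⟩
    have he0 : 0 < e := by nlinarith [hμe]
    have heρ : e < rho := by nlinarith [hμe]
    have hp : e * α ≤ K := by
      have := Mjk_err lam rho hlam hrho hα2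
      rw [← hMdef, hμe] at this
      rw [hKdef]; nlinarith [this]
    have hD : α * rho ^ 2 / 2 ≤ α * rho ^ 2 - (rho - e) ^ 2 := by nlinarith
    have hD0 : 0 < α * rho ^ 2 - (rho - e) ^ 2 := by nlinarith
    show |(M α) ^ 2 * (α * rho) * ((M α - rho) ^ 2 + rho * Delta)
        / ((α * rho ^ 2 - (M α) ^ 2) ^ 2) - Delta / α| ≤ 4 * C₁ / rho ^ 4 / α ^ 2
    rw [hμe]
    rw [ridge_heq2 rho Delta α e (ne_of_gt hα) (ne_of_gt hD0)]
    set num : ℝ := rho * (rho - e) ^ 2 * (e * α) ^ 2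
        - Delta * rho ^ 2 * (e * α) * (2 * rho - e) * α
        + 2 * Delta * α * rho ^ 2 * (rho - e) ^ 2
        - Delta * (rho - e) ^ 4 with hnumdef
    -- bound |num| ≤ C₁ * α
    have ha2 : (rho - e) ^ 2 ≤ rho ^ 2 := pow_le_pow_left₀ (by linarith) (by linarith) 2
    have hb2 : (e * α) ^ 2 ≤ K ^ 2 :=
      pow_le_pow_left₀ (le_of_lt (mul_pos he0 hα)) hp 2
    have h1 : rho * ((rho - e) ^ 2 * (e * α) ^ 2) ≤ rho * (rho ^ 2 * K ^ 2) :=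
      mul_le_mul_of_nonneg_left (mul_le_mul ha2 hb2 (sq_nonneg _) (sq_nonneg _)) hrho.le
    have h2 : (e * α) * (2 * rho - e) ≤ K * (2 * rho) :=
      mul_le_mul hp (by linarith) (by linarith) hK.le
    have h2' : (Delta * rho ^ 2 * α) * ((e * α) * (2 * rho - e))
        ≤ (Delta * rho ^ 2 * α) * (K * (2 * rho)) :=
      mul_le_mul_of_nonneg_left h2 (by positivity)
    have h2pos : 0 ≤ Delta * rho ^ 2 * (e * α) * (2 * rho - e) * α := by
      have : (0:ℝ) ≤ 2 * rho - e := by linarith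
      positivity
    have h3 : 2 * Delta * α * rho ^ 2 * (rho - e) ^ 2 ≤ 2 * Delta * α * rho ^ 2 * rho ^ 2 :=
      mul_le_mul_of_nonneg_left ha2 (by positivity)
    have h3' : (0:ℝ) ≤ 2 * Delta * α * rho ^ 2 * (rho - e) ^ 2 := by positivity
    have h4 : Delta * (rho - e) ^ 4 ≤ Delta * rho ^ 4 :=
      mul_le_mul_of_nonneg_left (pow_le_pow_left₀ (by linarith) (by linarith) 4) hDelta.le
    have h4' : (0:ℝ) ≤ Delta * (rho - e) ^ 4 := by positivity
    have h1' : (0:ℝ) ≤ rho * ((rho - e) ^ 2 * (e * α) ^ 2) := by positivity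
    have hα1 : (1:ℝ) ≤ α := by linarith
    have hAux1 : rho ^ 3 * K ^ 2 ≤ rho ^ 3 * K ^ 2 * α :=
      le_mul_of_one_le_right (by positivity) hα1
    have hAux2 : Delta * rho ^ 4 ≤ Delta * rho ^ 4 * α :=
      le_mul_of_one_le_right (by positivity) hα1
    have hAux3 : (0:ℝ) ≤ Delta * rho ^ 4 * α := by positivity
    have hAux4 : (0:ℝ) ≤ Delta * K * rho ^ 3 * α := by positivity
    have hAux5 : (0:ℝ) ≤ rho ^ 3 * K ^ 2 * α := by positivity
    have hnum : |num| ≤ C₁ * α := by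
      rw [abs_le]
      constructor
      · rw [hnumdef, hC₁def]
        linarith [h1', h2', h3', h4, hAux2, hAux3, hAux4, hAux5]
      · rw [hnumdef, hC₁def]
        linarith [h1, h2pos, h3, h4', hAux1, hAux3, hAux4]
    -- conclude
    have hden : 0 < α * (α * rho ^ 2 - (rho - e) ^ 2) ^ 2 := by positivity
    rw [abs_div, abs_of_pos hden, div_le_div_iff₀ hden (by positivity)]
    have hD2sq : (α * rho ^ 2 / 2) ^ 2 ≤ (α * rho ^ 2 - (rho - e) ^ 2) ^ 2 :=
      pow_le_pow_left₀ (by positivity) hD 2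
    have s1 : |num| * α ^ 2 ≤ C₁ * α * α ^ 2 :=
      mul_le_mul_of_nonneg_right hnum (sq_nonneg α)
    have s2 : (4 * C₁ / rho ^ 4) * (α * (α * rho ^ 2 / 2) ^ 2) = C₁ * α * α ^ 2 := by
      field_simp
      ring
    have s3 : (4 * C₁ / rho ^ 4) * (α * (α * rho ^ 2 / 2) ^ 2)
        ≤ (4 * C₁ / rho ^ 4) * (α * (α * rho ^ 2 - (rho - e) ^ 2) ^ 2) :=
      mul_le_mul_of_nonneg_left (mul_le_mul_of_nonneg_left hD2sq hα.le) (by positivity)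
    exact s1.trans ((s2.symm.le).trans s3)
end

section
/- Let μ be a probability measure on [0,∞) with μ-integrable identity function, let α > 1, and let v > 0 satisfy v·α·∫ p/(1+p·v) dμ(p) = 1. Set κ := 1/α and f := ∫ 1/(1+p·v)² dμ(p). Then 1 − α·∫ (p·v/(1+p·v))² dμ(p) = (1 − κ − f)/κ, and consequently, for every Δ ∈ ℝ, if 1 − κ − f ≠ 0 then Δ·( 1/(1 − α·∫ (pv/(1+pv))² dμ(p)) − α/(α−1) ) = Δ·( κ/(1 − κ − f) − 1/(1 − κ) ). -/
open MeasureTheory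

/-- Equivalence of the unregularized pair-bootstrap variance formula from the state
evolution with the formula of El Karoui and Purdom (2018), where `κ = 1/α` and
`f = ∫ 1/(1+pv)² dμ`. -/
theorem stmt16 (μ : Measure ℝ) [IsProbabilityMeasure μ]
    (hsupp : ∀ᵐ p ∂μ, 0 ≤ p)
    (hint : Integrable (fun p : ℝ => p) μ)
    (alpha v : ℝ) (halpha : 1 < alpha) (hv : 0 < v)
    (hfix : v * alpha * ∫ p, p / (1 + p * v) ∂μ = 1)
    (kappa f : ℝ) (hkappa : kappa = 1 / alpha)
    (hf : f = ∫ p, 1 / (1 + p * v) ^ 2 ∂μ) :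
    1 - alpha * ∫ p, (p * v / (1 + p * v)) ^ 2 ∂μ = (1 - kappa - f) / kappa ∧
    ∀ Delta : ℝ, 1 - kappa - f ≠ 0 →
      Delta * (1 / (1 - alpha * ∫ p, (p * v / (1 + p * v)) ^ 2 ∂μ) - alpha / (alpha - 1))
        = Delta * (kappa / (1 - kappa - f) - 1 / (1 - kappa)) := by
  have hαpos : (0 : ℝ) < alpha := by linarith
  have hpos : ∀ᵐ p ∂μ, 0 < 1 + p * v := by
    filter_upwards [hsupp] with p hp
    nlinarith
  have mden : Measurable (fun p : ℝ => 1 + p * v) := by measurability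
  have meas1 : AEStronglyMeasurable (fun p : ℝ => 1 / (1 + p * v)) μ :=
    (measurable_const.div mden).aestronglyMeasurable
  have meas2 : AEStronglyMeasurable (fun p : ℝ => 1 / (1 + p * v) ^ 2) μ :=
    (measurable_const.div (mden.pow measurable_const)).aestronglyMeasurable
  have measp : AEStronglyMeasurable (fun p : ℝ => p / (1 + p * v)) μ :=
    (measurable_id.div mden).aestronglyMeasurable
  have int1 : Integrable (fun p : ℝ => 1 / (1 + p * v)) μ := by
    refine (integrable_const (1 : ℝ)).mono' meas1 ?_
    filter_upwards [hsupp, hpos] with p hp h1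
    rw [Real.norm_eq_abs, abs_of_nonneg (by positivity), div_le_one h1]
    nlinarith
  have int2 : Integrable (fun p : ℝ => 1 / (1 + p * v) ^ 2) μ := by
    refine (integrable_const (1 : ℝ)).mono' meas2 ?_
    filter_upwards [hsupp, hpos] with p hp h1
    rw [Real.norm_eq_abs, abs_of_nonneg (by positivity), div_le_one (by positivity)]
    nlinarith [mul_nonneg hp hv.le, sq_nonneg (p * v)]
  have intp : Integrable (fun p : ℝ => p / (1 + p * v)) μ := by
    refine (integrable_const (1 / v)).mono' measp ?_
    filter_upwards [hsupp, hpos] with p hp h1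
    rw [Real.norm_eq_abs, abs_of_nonneg (by positivity), div_le_div_iff₀ h1 hv]
    nlinarith
  have hI1 : ∫ p, 1 / (1 + p * v) ∂μ = 1 - 1 / alpha := by
    have heq : (fun p : ℝ => 1 / (1 + p * v)) =ᵐ[μ]
        fun p : ℝ => 1 - v * (p / (1 + p * v)) := by
      filter_upwards [hpos] with p h1
      field_simp
      ring
    have e1 : ∫ p, (1 - v * (p / (1 + p * v))) ∂μ
        = (∫ _p, (1 : ℝ) ∂μ) - ∫ p, v * (p / (1 + p * v)) ∂μ :=
      integral_sub (integrable_const 1) (intp.const_mul v)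
    rw [integral_congr_ae heq, e1, integral_const, integral_const_mul]
    have hip : ∫ p, p / (1 + p * v) ∂μ = 1 / (v * alpha) := by
      field_simp at hfix ⊢
      linarith [hfix]
    rw [hip, probReal_univ]
    field_simp
    ring
  have hIsq : ∫ p, (p * v / (1 + p * v)) ^ 2 ∂μ = 1 - 2 * (1 - 1 / alpha) + f := by
    have heq : (fun p : ℝ => (p * v / (1 + p * v)) ^ 2) =ᵐ[μ]
        fun p : ℝ => 1 - 2 * (1 / (1 + p * v)) + 1 / (1 + p * v) ^ 2 := by
      filter_upwards [hpos] with p h1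
      have h1' : (1 + p * v) ≠ 0 := ne_of_gt h1
      field_simp
      ring
    have e1 : ∫ p, (1 - 2 * (1 / (1 + p * v)) + 1 / (1 + p * v) ^ 2) ∂μ
        = (∫ p, (1 - 2 * (1 / (1 + p * v))) ∂μ) + ∫ p, 1 / (1 + p * v) ^ 2 ∂μ :=
      integral_add ((integrable_const 1).sub (int1.const_mul 2)) int2
    have e2 : ∫ p, (1 - 2 * (1 / (1 + p * v))) ∂μ
        = (∫ _p, (1 : ℝ) ∂μ) - ∫ p, 2 * (1 / (1 + p * v)) ∂μ :=
      integral_sub (integrable_const 1) (int1.const_mul 2)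
    rw [integral_congr_ae heq, e1, e2, integral_const, integral_const_mul, hI1, hf]
    simp
  have hκne : kappa ≠ 0 := by
    rw [hkappa]; positivity
  have hmain : 1 - alpha * ∫ p, (p * v / (1 + p * v)) ^ 2 ∂μ = (1 - kappa - f) / kappa := by
    rw [hIsq, hkappa]
    field_simp
    ring
  refine ⟨hmain, fun Delta hne => ?_⟩
  have h2 : 1 / (1 - alpha * ∫ p, (p * v / (1 + p * v)) ^ 2 ∂μ) = kappa / (1 - kappa - f) := by
    rw [hmain, one_div, div_eq_mul_inv, mul_inv, inv_inv, mul_comm, ← div_eq_mul_inv]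
  have h3 : alpha / (alpha - 1) = 1 / (1 - kappa) := by
    rw [hkappa]
    rw [div_eq_div_iff (by linarith) (by field_simp; intro h; rw [div_eq_zero_iff] at h; rcases h with h | h <;> linarith)]
    field_simp
  rw [h2, h3]
end

section
/- Let λ > 0 and let p be a Poisson(1) random variable. For each α > 0 let v(α) denote the unique positive solution of v = 1/(λ + α·E[p/(1+p·v)]). Then v(α) − 1/α − (2−λ)/α² = O(1/α³) as α → ∞. -/
open MeasureTheory

lemma sumB0 : Summable (fun k : ℕ => (1:ℝ) / k.factorial) ∧
    ∑' k : ℕ, (1:ℝ) / k.factorial = Real.exp 1 := by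
  constructor
  · simpa using Real.summable_pow_div_factorial 1
  · rw [Real.exp_eq_exp_ℝ, NormedSpace.exp_eq_tsum_div]
    simp

lemma shift_aux (g : ℕ → ℝ) (j : ℕ) (h0 : ∀ i ∈ Finset.range j, g i = 0)
    (hs : ∀ k : ℕ, g (k + j) = 1 / (k.factorial : ℝ)) :
    Summable g ∧ ∑' k, g k = Real.exp 1 := by
  have hS : Summable g := by
    rw [← summable_nat_add_iff j]
    exact sumB0.1.congr fun k => (hs k).symm
  refine ⟨hS, ?_⟩
  rw [← Summable.sum_add_tsum_nat_add j hS, Finset.sum_eq_zero h0, tsum_congr hs, sumB0.2, zero_add]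

lemma sumG1 : Summable (fun k : ℕ => (k:ℝ) / k.factorial) ∧
    ∑' k : ℕ, (k:ℝ) / k.factorial = Real.exp 1 := by
  refine shift_aux _ 1 (by simp) (fun k => ?_)
  have h1 : (0:ℝ) < k.factorial := by exact_mod_cast k.factorial_pos
  rw [Nat.factorial_succ]
  push_cast
  rw [div_eq_div_iff (by positivity) h1.ne']
  ring

lemma sumG2 : Summable (fun k : ℕ => (k:ℝ) * ((k:ℝ) - 1) / k.factorial) ∧
    ∑' k : ℕ, (k:ℝ) * ((k:ℝ) - 1) / k.factorial = Real.exp 1 := by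
  refine shift_aux _ 2 ?_ (fun k => ?_)
  · intro i hi
    simp only [Finset.mem_range] at hi
    interval_cases i <;> norm_num
  · have h1 : (0:ℝ) < k.factorial := by exact_mod_cast k.factorial_pos
    rw [show k + 2 = (k+1) + 1 from rfl, Nat.factorial_succ, Nat.factorial_succ]
    push_cast
    rw [div_eq_div_iff (by positivity) h1.ne']
    ring

lemma sumG3 : Summable (fun k : ℕ => (k:ℝ) * ((k:ℝ) - 1) * ((k:ℝ) - 2) / k.factorial) ∧
    ∑' k : ℕ, (k:ℝ) * ((k:ℝ) - 1) * ((k:ℝ) - 2) / k.factorial = Real.exp 1 := by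
  refine shift_aux _ 3 ?_ (fun k => ?_)
  · intro i hi
    simp only [Finset.mem_range] at hi
    interval_cases i <;> norm_num
  · have h1 : (0:ℝ) < k.factorial := by exact_mod_cast k.factorial_pos
    rw [show k + 3 = ((k+1) + 1) + 1 from rfl, Nat.factorial_succ, Nat.factorial_succ,
      Nat.factorial_succ]
    push_cast
    rw [div_eq_div_iff (by positivity) h1.ne']
    ring
lemma expE : Real.exp (-1) * Real.exp 1 = 1 := by rw [← Real.exp_add]; norm_num

lemma sumB1 : Summable (fun k : ℕ => (k:ℝ) * (Real.exp (-1) / k.factorial)) ∧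
    ∑' k : ℕ, (k:ℝ) * (Real.exp (-1) / k.factorial) = 1 := by
  constructor
  · exact (sumG1.1.mul_left (Real.exp (-1))).congr (fun k => by ring)
  · calc ∑' k : ℕ, (k:ℝ) * (Real.exp (-1) / k.factorial)
        = ∑' k : ℕ, Real.exp (-1) * ((k:ℝ) / k.factorial) := tsum_congr (fun k => by ring)
      _ = 1 := by rw [tsum_mul_left, sumG1.2, expE]

lemma sumB2 : Summable (fun k : ℕ => (k:ℝ)^2 * (Real.exp (-1) / k.factorial)) ∧
    ∑' k : ℕ, (k:ℝ)^2 * (Real.exp (-1) / k.factorial) = 2 := by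
  have hpt : ∀ k : ℕ, Real.exp (-1) * ((k:ℝ) * ((k:ℝ) - 1) / k.factorial)
      + Real.exp (-1) * ((k:ℝ) / k.factorial) = (k:ℝ)^2 * (Real.exp (-1) / k.factorial) := by
    intro k; ring
  constructor
  · exact ((sumG2.1.mul_left (Real.exp (-1))).add (sumG1.1.mul_left (Real.exp (-1)))).congr hpt
  · calc ∑' k : ℕ, (k:ℝ)^2 * (Real.exp (-1) / k.factorial)
        = ∑' k : ℕ, (Real.exp (-1) * ((k:ℝ) * ((k:ℝ) - 1) / k.factorial)
            + Real.exp (-1) * ((k:ℝ) / k.factorial)) := tsum_congr (fun k => (hpt k).symm)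
      _ = 2 := by
          rw [Summable.tsum_add (sumG2.1.mul_left (Real.exp (-1))) (sumG1.1.mul_left (Real.exp (-1))),
            tsum_mul_left, tsum_mul_left, sumG1.2, sumG2.2, expE]
          norm_num

lemma sumB3 : Summable (fun k : ℕ => (k:ℝ)^3 * (Real.exp (-1) / k.factorial)) ∧
    ∑' k : ℕ, (k:ℝ)^3 * (Real.exp (-1) / k.factorial) = 5 := by
  have hpt : ∀ k : ℕ, Real.exp (-1) * ((k:ℝ) * ((k:ℝ) - 1) * ((k:ℝ) - 2) / k.factorial)
      + ((3 * Real.exp (-1)) * ((k:ℝ) * ((k:ℝ) - 1) / k.factorial)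
        + Real.exp (-1) * ((k:ℝ) / k.factorial))
      = (k:ℝ)^3 * (Real.exp (-1) / k.factorial) := by
    intro k; ring
  have hs2 := (sumG2.1.mul_left (3 * Real.exp (-1))).add (sumG1.1.mul_left (Real.exp (-1)))
  constructor
  · exact ((sumG3.1.mul_left (Real.exp (-1))).add hs2).congr hpt
  · calc ∑' k : ℕ, (k:ℝ)^3 * (Real.exp (-1) / k.factorial)
        = ∑' k : ℕ, (Real.exp (-1) * ((k:ℝ) * ((k:ℝ) - 1) * ((k:ℝ) - 2) / k.factorial)
            + ((3 * Real.exp (-1)) * ((k:ℝ) * ((k:ℝ) - 1) / k.factorial)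
              + Real.exp (-1) * ((k:ℝ) / k.factorial))) := tsum_congr (fun k => (hpt k).symm)
      _ = 5 := by
          rw [Summable.tsum_add (sumG3.1.mul_left (Real.exp (-1))) hs2,
            Summable.tsum_add (sumG2.1.mul_left (3 * Real.exp (-1))) (sumG1.1.mul_left (Real.exp (-1))),
            tsum_mul_left, tsum_mul_left, tsum_mul_left, sumG1.2, sumG2.2, sumG3.2]
          nlinarith [expE]
lemma integral_eq_tsum {Ω : Type*} [MeasurableSpace Ω] (P : Measure Ω) [IsProbabilityMeasure P]
    (p : Ω → ℕ) (hpmeas : Measurable p)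
    (hp : ∀ k : ℕ, P {ω | p ω = k} = ENNReal.ofReal (Real.exp (-1) / k.factorial))
    (w : ℝ) (hw : 0 < w) :
    ∫ ω, (p ω : ℝ) / (1 + (p ω : ℝ) * w) ∂P
      = ∑' k : ℕ, ((k:ℝ) / (1 + (k:ℝ) * w)) * (Real.exp (-1) / k.factorial) := by
  haveI : IsProbabilityMeasure (P.map p) := Measure.isProbabilityMeasure_map hpmeas.aemeasurable
  set f : ℕ → ℝ := fun k => (k:ℝ) / (1 + (k:ℝ) * w) with hfdef
  have hfm : Measurable f := measurable_from_top
  have hfb : ∀ k, ‖f k‖ ≤ 1 / w := by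
    intro k
    have hd : (0:ℝ) < 1 + (k:ℝ) * w := by positivity
    rw [Real.norm_of_nonneg (by positivity)]
    rw [div_le_div_iff₀ hd hw]
    nlinarith [Nat.cast_nonneg (α := ℝ) k]
  have hInt : Integrable f (P.map p) :=
    Integrable.mono' (integrable_const (1/w)) hfm.aestronglyMeasurable (ae_of_all _ hfb)
  have h1 : ∫ ω, f (p ω) ∂P = ∫ k, f k ∂(P.map p) :=
    (integral_map hpmeas.aemeasurable hfm.aestronglyMeasurable).symm
  rw [show (∫ ω, (p ω : ℝ) / (1 + (p ω : ℝ) * w) ∂P) = ∫ ω, f (p ω) ∂P from rfl, h1,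
    integral_countable' hInt]
  refine tsum_congr fun k => ?_
  have hmk : (P.map p) {k} = ENNReal.ofReal (Real.exp (-1) / k.factorial) := by
    rw [Measure.map_apply hpmeas (measurableSet_singleton k)]
    exact hp k
  rw [measureReal_def, hmk, ENNReal.toReal_ofReal (by positivity), smul_eq_mul, mul_comm]

lemma Ibounds (w : ℝ) (hw : 0 < w) :
    Real.exp (-1) / (1 + w)
        ≤ (∑' k : ℕ, ((k:ℝ) / (1 + (k:ℝ) * w)) * (Real.exp (-1) / k.factorial)) ∧
    1 - 2*w ≤ (∑' k : ℕ, ((k:ℝ) / (1 + (k:ℝ) * w)) * (Real.exp (-1) / k.factorial)) ∧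
    (∑' k : ℕ, ((k:ℝ) / (1 + (k:ℝ) * w)) * (Real.exp (-1) / k.factorial))
        ≤ 1 - 2*w + 5*w^2 := by
  set F : ℕ → ℝ := fun k => ((k:ℝ) / (1 + (k:ℝ) * w)) * (Real.exp (-1) / k.factorial) with hFdef
  have hden : ∀ k : ℕ, (0:ℝ) < 1 + (k:ℝ) * w := fun k => by positivity
  have hb0 : ∀ k : ℕ, (0:ℝ) ≤ Real.exp (-1) / k.factorial := fun k => by positivity
  have hnn : ∀ k, 0 ≤ F k := fun k => by
    apply mul_nonneg _ (hb0 k)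
    positivity
  have hFle : ∀ k, F k ≤ (k:ℝ) * (Real.exp (-1) / k.factorial) := by
    intro k
    apply mul_le_mul_of_nonneg_right _ (hb0 k)
    apply div_le_self (Nat.cast_nonneg k)
    nlinarith [Nat.cast_nonneg (α := ℝ) k]
  have hSF : Summable F := Summable.of_nonneg_of_le hnn hFle sumB1.1
  refine ⟨?_, ?_, ?_⟩
  · have h := Summable.le_tsum hSF 1 (fun j _ => hnn j)
    have h1 : F 1 = Real.exp (-1) / (1 + w) := by
      simp only [hFdef, Nat.cast_one, Nat.factorial_one, one_mul, div_one]
      ring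
    rwa [h1] at h
  · have hpt : ∀ k : ℕ, (k:ℝ) * (Real.exp (-1) / k.factorial)
        - w * ((k:ℝ)^2 * (Real.exp (-1) / k.factorial)) ≤ F k := by
      intro k
      have hk : (0:ℝ) ≤ k := Nat.cast_nonneg k
      have key : (k:ℝ) - w * (k:ℝ)^2 ≤ (k:ℝ) / (1 + (k:ℝ) * w) := by
        rw [le_div_iff₀ (hden k)]
        nlinarith [mul_nonneg (mul_nonneg (mul_nonneg hw.le hw.le) hk)
          (mul_nonneg hk hk)]
      calc (k:ℝ) * (Real.exp (-1) / k.factorial)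
            - w * ((k:ℝ)^2 * (Real.exp (-1) / k.factorial))
          = ((k:ℝ) - w * (k:ℝ)^2) * (Real.exp (-1) / k.factorial) := by ring
        _ ≤ ((k:ℝ) / (1 + (k:ℝ) * w)) * (Real.exp (-1) / k.factorial) :=
            mul_le_mul_of_nonneg_right key (hb0 k)
    have hSl : Summable (fun k : ℕ => (k:ℝ) * (Real.exp (-1) / k.factorial)
        - w * ((k:ℝ)^2 * (Real.exp (-1) / k.factorial))) :=
      sumB1.1.sub (sumB2.1.mul_left w)
    have h := Summable.tsum_le_tsum hpt hSl hSF
    rw [Summable.tsum_sub sumB1.1 (sumB2.1.mul_left w), tsum_mul_left, sumB1.2, sumB2.2] at h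
    linarith
  · have hpt : ∀ k : ℕ, F k ≤ ((k:ℝ) * (Real.exp (-1) / k.factorial)
        - w * ((k:ℝ)^2 * (Real.exp (-1) / k.factorial)))
        + w^2 * ((k:ℝ)^3 * (Real.exp (-1) / k.factorial)) := by
      intro k
      have hk : (0:ℝ) ≤ k := Nat.cast_nonneg k
      have key : (k:ℝ) / (1 + (k:ℝ) * w) ≤ (k:ℝ) - w * (k:ℝ)^2 + w^2 * (k:ℝ)^3 := by
        rw [div_le_iff₀ (hden k)]
        nlinarith [mul_nonneg (mul_nonneg (mul_nonneg (mul_nonneg hw.le hw.le) hw.le) hk)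
          (mul_nonneg (mul_nonneg hk hk) hk)]
      calc F k ≤ ((k:ℝ) - w * (k:ℝ)^2 + w^2 * (k:ℝ)^3) * (Real.exp (-1) / k.factorial) :=
            mul_le_mul_of_nonneg_right key (hb0 k)
        _ = ((k:ℝ) * (Real.exp (-1) / k.factorial)
              - w * ((k:ℝ)^2 * (Real.exp (-1) / k.factorial)))
              + w^2 * ((k:ℝ)^3 * (Real.exp (-1) / k.factorial)) := by ring
    have hSr : Summable (fun k : ℕ => ((k:ℝ) * (Real.exp (-1) / k.factorial)
        - w * ((k:ℝ)^2 * (Real.exp (-1) / k.factorial)))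
        + w^2 * ((k:ℝ)^3 * (Real.exp (-1) / k.factorial))) :=
      (sumB1.1.sub (sumB2.1.mul_left w)).add (sumB3.1.mul_left (w^2))
    have h := Summable.tsum_le_tsum hpt hSF hSr
    rw [Summable.tsum_add (sumB1.1.sub (sumB2.1.mul_left w)) (sumB3.1.mul_left (w^2)),
      Summable.tsum_sub sumB1.1 (sumB2.1.mul_left w), tsum_mul_left, tsum_mul_left,
      sumB1.2, sumB2.2, sumB3.2] at h
    linarith
set_option maxHeartbeats 2000000 in
/-- Second-order large-`α` expansion of the pair-bootstrap overlap of the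
ridge-regression state evolution: if `v(α)` is the unique positive solution of
`v = 1/(λ + α·E[p/(1+pv)])` with `p ~ Poisson(1)`, then
`v(α) = 1/α + (2−λ)/α² + O(1/α³)` as `α → ∞`. -/
theorem stmt17 {Ω : Type*} [MeasurableSpace Ω] (P : Measure Ω) [IsProbabilityMeasure P]
    (p : Ω → ℕ) (hpmeas : Measurable p)
    (hp : ∀ k : ℕ, P {ω | p ω = k} = ENNReal.ofReal (Real.exp (-1) / k.factorial))
    (lam : ℝ) (hlam : 0 < lam)
    (v : ℝ → ℝ)
    (hv : ∀ α : ℝ, 0 < α → 0 < v α ∧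
      v α = 1 / (lam + α * ∫ ω, (p ω : ℝ) / (1 + (p ω : ℝ) * v α) ∂P))
    (hvuniq : ∀ α : ℝ, 0 < α → ∀ w : ℝ, 0 < w →
      w = 1 / (lam + α * ∫ ω, (p ω : ℝ) / (1 + (p ω : ℝ) * w) ∂P) → w = v α) :
    ∃ C > 0, ∃ α₀ : ℝ, ∀ α ≥ α₀, |v α - 1 / α - (2 - lam) / α ^ 2| ≤ C / α ^ 3 := by
  have hc0 : (0:ℝ) < Real.exp (-1) / (1 + 1/lam) := by positivity
  set c₀ : ℝ := Real.exp (-1) / (1 + 1/lam) with hc0def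
  clear_value c₀
  refine ⟨2*lam^2 + 60*lam + 328, by nlinarith [sq_nonneg lam], max 1 (8/c₀), ?_⟩
  intro α hα
  have hα1 : (1:ℝ) ≤ α := le_trans (le_max_left _ _) hα
  have hαpos : (0:ℝ) < α := by linarith
  obtain ⟨hwpos, hveq⟩ := hv α hαpos
  set w := v α with hwdef
  have hIt := integral_eq_tsum P p hpmeas hp w hwpos
  obtain ⟨hI1, hI2, hI3⟩ := Ibounds w hwpos
  rw [← hIt] at hI1 hI2 hI3
  set I : ℝ := ∫ ω, (p ω : ℝ) / (1 + (p ω : ℝ) * w) ∂P with hIdef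
  clear_value I
  clear hIt hvuniq hv hp hpmeas
  clear_value w
  have hInn : (0:ℝ) ≤ I := le_trans (by positivity) hI1
  have hden : (0:ℝ) < lam + α * I := by nlinarith [mul_nonneg hαpos.le hInn]
  have hkey : w * (lam + α * I) = 1 := by
    rw [hveq]; field_simp
  have hwlam : w ≤ 1/lam := by
    rw [hveq]
    apply one_div_le_one_div_of_le hlam
    nlinarith [mul_nonneg hαpos.le hInn]
  have hIc : c₀ ≤ I := by
    refine le_trans ?_ hI1
    rw [hc0def, div_le_div_iff₀ (by positivity) (by positivity)]
    nlinarith [mul_nonneg (Real.exp_pos (-1)).le (sub_nonneg.2 hwlam)]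
  have hα8 : 8/c₀ ≤ α := le_trans (le_max_right _ _) hα
  have hac : 8 ≤ α * c₀ := by
    rw [div_le_iff₀ hc0] at hα8; linarith
  have hw8 : w ≤ 1/8 := by
    nlinarith [hkey, mul_nonneg (mul_nonneg hαpos.le hwpos.le) (sub_nonneg.2 hIc),
      mul_nonneg hwpos.le (sub_nonneg.2 hac), mul_nonneg hwpos.le hlam.le]
  have hI34 : (3:ℝ)/4 ≤ I := by linarith
  have hu0 : (0:ℝ) ≤ α * w := mul_nonneg hαpos.le hwpos.le
  have hu : α * w ≤ 2 := by
    nlinarith [hkey, mul_nonneg (mul_nonneg hαpos.le hwpos.le) (sub_nonneg.2 hI34),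
      mul_nonneg hwpos.le hlam.le]
  set E : ℝ := α * w * (I - (1 - 2*w)) with hEdef
  clear_value E
  clear hI1 hveq hwlam hIc hα8 hac hα hc0 hc0def
  have hE0 : (0:ℝ) ≤ E := by
    rw [hEdef]; apply mul_nonneg hu0; linarith
  have hmain : lam*w + α*w - 2*α*w^2 + E = 1 := by
    rw [hEdef]; linear_combination hkey
  have hE5 : E ≤ 5*α*w^3 := by
    rw [hEdef]
    calc α * w * (I - (1 - 2*w)) ≤ α * w * (5*w^2) :=
          mul_le_mul_of_nonneg_left (by linarith) hu0
      _ = 5*α*w^3 := by ring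
  have hcube : (α*w)^3 ≤ 8 := by
    have h := pow_le_pow_left₀ hu0 hu 3
    norm_num at h
    exact h
  have hE2 : α^2 * E ≤ 40 := by
    calc α^2 * E ≤ α^2 * (5*α*w^3) := mul_le_mul_of_nonneg_left hE5 (by positivity)
      _ ≤ 40 := by nlinarith [hcube]
  have hE2n : (0:ℝ) ≤ α^2 * E := mul_nonneg (sq_nonneg α) hE0
  have hαsq : α ≤ α^2 := by
    calc α = α*1 := (mul_one α).symm
      _ ≤ α*α := mul_le_mul_of_nonneg_left hα1 hαpos.le
      _ = α^2 := (sq α).symm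
  have hE1 : α * E ≤ 40 := by
    nlinarith [hE2, mul_nonneg hE0 (sub_nonneg.2 hαsq)]
  have hE1n : (0:ℝ) ≤ α * E := mul_nonneg hαpos.le hE0
  have hid1 : α*(α*w - 1) = -(lam*(α*w)) + 2*(α*w)^2 - α*E := by
    linear_combination α * hmain
  have hAabs : |α*(α*w - 1)| ≤ 2*lam + 48 := by
    rw [hid1]
    rw [abs_le]
    constructor
    · nlinarith [mul_le_mul_of_nonneg_left hu hlam.le, sq_nonneg (α*w)]
    · nlinarith [mul_nonneg hlam.le hu0]
  obtain ⟨hAl, hAu⟩ := abs_le.mp hAabs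
  have hid2 : α^3*w - α^2 - (2 - lam)*α
      = -(lam*(α*(α*w - 1))) + 2*(α*(α*w - 1))*(α*w + 1) - α^2*E := by
    linear_combination (α^2) * hmain
  have hh1 : (0:ℝ) ≤ (2*lam + 48 - α*(α*w - 1))*(α*w + 1) :=
    mul_nonneg (by linarith) (by positivity)
  have hh2 : (0:ℝ) ≤ (α*(α*w - 1) + (2*lam + 48))*(α*w + 1) :=
    mul_nonneg (by linarith) (by positivity)
  have hh3 : (0:ℝ) ≤ (2*lam + 48)*(2 - α*w) := mul_nonneg (by linarith) (by linarith)
  have hT : |α^3*w - α^2 - (2 - lam)*α| ≤ 2*lam^2 + 60*lam + 328 := by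
    rw [hid2, abs_le]
    constructor
    · nlinarith [mul_nonneg hlam.le (sub_nonneg.2 hAu)]
    · nlinarith [mul_nonneg hlam.le (sub_nonneg.2 hAu),
        mul_nonneg hlam.le (show (0:ℝ) ≤ α*(α*w-1) + (2*lam+48) by linarith)]
  have hTeq : w - 1/α - (2 - lam)/α^2 = (α^3*w - α^2 - (2 - lam)*α)/α^3 := by
    field_simp
  rw [hTeq, abs_div, abs_of_pos (show (0:ℝ) < α^3 by positivity)]
  gcongr
end
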